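/- arXiv:math/0509716 — 8 statements merged into one kernel-verified Lean document; each statement's English description precedes it below -/
import Mathlib

section
/- Let G be a distance regular graph with diameter n ≥ 1, let A_0, A_1, …, A_n be its adjacency matrices, let v_0, v_1, …, v_n be real polynomials with A_i = v_i(A_1) for all i, and let θ_0 > θ_1 > … > θ_n be the distinct eigenvalues of A_1 (so θ_0 = k_1 and v_i(θ_0) = k_i). Then c_2(G)^2 ≥ (n^2 · v_n(θ_0) / v_1(θ_0)) · min { (v_1(θ_0) − v_1(θ_j)) / (v_n(θ_0) − v_n(θ_j)) : j ∈ {1, …, n}, v_n(θ_j) ≠ v_n(θ_0) }. -/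
open scoped BigOperators

/-- The least distortion `c₂(G)` of an embedding of the connected graph `G`
(with its shortest path metric) into Euclidean space. -/
noncomputable def leastDistortion {V : Type*} [Fintype V] (G : SimpleGraph V) : ℝ :=
  sInf {D : ℝ | ∃ (m : ℕ) (ρ : V → EuclideanSpace ℝ (Fin m)),
    ∀ x y : V, (G.dist x y : ℝ) ≤ ‖ρ x - ρ y‖ ∧ ‖ρ x - ρ y‖ ≤ D * (G.dist x y : ℝ)}

/-- A connected finite graph is distance regular if there are constants
`aᵢ, bᵢ, cᵢ` such that for every pair of vertices at distance `i`, the number of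
common neighbours at the prescribed distances are `aᵢ, bᵢ, cᵢ`. -/
def IsDistanceRegular {V : Type*} [Fintype V] (G : SimpleGraph V) : Prop :=
  G.Connected ∧ ∀ i : ℕ, ∃ a b c : ℕ, ∀ x y : V, G.dist x y = i →
    Nat.card {z : V // G.dist x z = 1 ∧ G.dist z y = i} = a ∧
    Nat.card {z : V // G.dist x z = 1 ∧ G.dist z y = i + 1} = b ∧
    Nat.card {z : V // G.dist x z = 1 ∧ G.dist z y = i - 1} = c

/-- The `i`-th adjacency matrix of a graph: `(Aᵢ)_{xy} = 1` iff `d(x,y) = i`. -/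
noncomputable def distAdjMatrix {V : Type*} [Fintype V] (G : SimpleGraph V) (i : ℕ) :
    Matrix V V ℝ :=
  Matrix.of fun x y => if G.dist x y = i then (1 : ℝ) else 0

open Matrix Polynomial

lemma aux_pow_mulVec {V : Type*} [Fintype V] [DecidableEq V] (M : Matrix V V ℝ)
    (u : V → ℝ) (μ : ℝ) (h : M *ᵥ u = μ • u) (k : ℕ) : (M ^ k) *ᵥ u = μ ^ k • u := by
  induction k with
  | zero => simp
  | succ k ih =>
      rw [pow_succ, ← mulVec_mulVec, h, mulVec_smul, ih, smul_smul, pow_succ]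
      ring_nf

lemma aux_aeval_mulVec {V : Type*} [Fintype V] [DecidableEq V] (M : Matrix V V ℝ)
    (u : V → ℝ) (μ : ℝ) (h : M *ᵥ u = μ • u) (p : Polynomial ℝ) :
    (aeval M p) *ᵥ u = p.eval μ • u := by
  induction p using Polynomial.induction_on' with
  | add p q hp hq => rw [map_add, add_mulVec, hp, hq, eval_add, add_smul]
  | monomial k a =>
      rw [aeval_monomial, eval_monomial]
      rw [Algebra.algebraMap_eq_smul_one, smul_mul_assoc, one_mul, smul_mulVec,
        aux_pow_mulVec M u μ h k, smul_smul]

lemma aux_mem_spectrum_iff {V : Type*} [Fintype V] [DecidableEq V] (M : Matrix V V ℝ) (μ : ℝ) :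
    μ ∈ spectrum ℝ M ↔ ∃ u : V → ℝ, u ≠ 0 ∧ M *ᵥ u = μ • u := by
  rw [spectrum.mem_iff]
  rw [Matrix.isUnit_iff_isUnit_det, isUnit_iff_ne_zero, not_ne_iff,
    ← Matrix.exists_mulVec_eq_zero_iff]
  constructor
  · rintro ⟨u, hu, h⟩
    refine ⟨u, hu, ?_⟩
    rw [sub_mulVec, Algebra.algebraMap_eq_smul_one, smul_mulVec, one_mulVec,
      sub_eq_zero] at h
    exact h.symm
  · rintro ⟨u, hu, h⟩
    exact ⟨u, hu, by rw [sub_mulVec, Algebra.algebraMap_eq_smul_one, smul_mulVec,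
      one_mulVec, h, sub_self]⟩

lemma aux_perron {V : Type*} [Fintype V] (M : Matrix V V ℝ)
    (hnn : ∀ x y, 0 ≤ M x y) (r : ℝ) (hr : ∀ x, ∑ y, M x y = r)
    (μ : ℝ) (u : V → ℝ) (hu : u ≠ 0) (h : M *ᵥ u = μ • u) : |μ| ≤ r := by
  have hVne : Nonempty V := by
    by_contra hV
    exact hu (funext fun x => absurd ⟨x⟩ hV)
  obtain ⟨x₀, -, hx₀⟩ := Finset.exists_max_image Finset.univ (fun x => |u x|)
    ⟨Classical.arbitrary V, Finset.mem_univ _⟩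
  have hux : 0 < |u x₀| := by
    rcases Function.ne_iff.1 hu with ⟨z, hz⟩
    exact lt_of_lt_of_le (abs_pos.2 hz) (hx₀ z (Finset.mem_univ _))
  have key : |μ| * |u x₀| ≤ r * |u x₀| := by
    have h1 : (M *ᵥ u) x₀ = μ * u x₀ := by rw [h]; rfl
    have h2 : |μ * u x₀| ≤ ∑ y, M x₀ y * |u x₀| := by
      rw [← h1]
      refine le_trans (Finset.abs_sum_le_sum_abs _ _) ?_
      refine Finset.sum_le_sum fun y _ => ?_
      rw [abs_mul, abs_of_nonneg (hnn x₀ y)]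
      exact mul_le_mul_of_nonneg_left (hx₀ y (Finset.mem_univ _)) (hnn x₀ y)
    rw [abs_mul] at h2
    calc |μ| * |u x₀| ≤ ∑ y, M x₀ y * |u x₀| := h2
      _ = (∑ y, M x₀ y) * |u x₀| := by rw [Finset.sum_mul]
      _ = r * |u x₀| := by rw [hr]
  exact le_of_mul_le_mul_right key hux

lemma aux_quad_eq {V : Type*} [Fintype V] [DecidableEq V] (P : Matrix V V ℝ)
    (p c : V → ℝ) (B : V → V → ℝ)
    (horth : ∀ i j, B i ⬝ᵥ B j = if i = j then 1 else 0)
    (hP : ∀ i, P *ᵥ B i = p i • B i) (f : V → ℝ) (hf : f = ∑ i, c i • B i) :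
    f ⬝ᵥ (P *ᵥ f) = ∑ i, p i * c i ^ 2 := by
  have hPf : P *ᵥ f = ∑ i, (c i * p i) • B i := by
    rw [hf, ← Matrix.mulVecLin_apply, map_sum]
    refine Finset.sum_congr rfl fun i _ => ?_
    rw [LinearMap.map_smul, Matrix.mulVecLin_apply, hP i, smul_smul]
  have dpl : ∀ (u : V → V → ℝ) (w : V → ℝ), (∑ i, u i) ⬝ᵥ w = ∑ i, u i ⬝ᵥ w := by
    intro u w
    simp only [dotProduct, Finset.sum_apply, Finset.sum_mul]
    exact Finset.sum_comm
  have dpr : ∀ (w : V → ℝ) (u : V → V → ℝ), w ⬝ᵥ (∑ i, u i) = ∑ i, w ⬝ᵥ u i := by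
    intro w u
    simp only [dotProduct, Finset.sum_apply, Finset.mul_sum]
    exact Finset.sum_comm
  rw [hPf, hf, dpl]
  refine Finset.sum_congr rfl fun i _ => ?_
  rw [smul_dotProduct, dpr, Finset.smul_sum]
  rw [Finset.sum_eq_single i]
  · rw [dotProduct_smul, horth, if_pos rfl]
    simp only [smul_eq_mul]
    ring
  · intro j _ hj
    rw [dotProduct_smul, horth, if_neg hj.symm]
    simp
  · intro h; exact absurd (Finset.mem_univ i) h

lemma aux_expansion {V : Type*} [Fintype V] (b : OrthonormalBasis V ℝ (EuclideanSpace ℝ V))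
    (g : V → ℝ) : ∃ c : V → ℝ, g = ∑ i, c i • (WithLp.equiv 2 (V → ℝ)) (b i) := by
  classical
  refine ⟨fun i => b.repr ((WithLp.equiv 2 (V → ℝ)).symm g) i, ?_⟩
  have h := b.sum_repr ((WithLp.equiv 2 (V → ℝ)).symm g)
  have h2 := congrArg (WithLp.linearEquiv 2 ℝ (V → ℝ)) h
  rw [map_sum] at h2
  simp only [_root_.map_smul] at h2
  rw [show ∀ z, (WithLp.linearEquiv 2 ℝ (V → ℝ)) z = (WithLp.equiv 2 (V → ℝ)) z
    from fun z => rfl] at h2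
  rw [Equiv.apply_symm_apply] at h2
  exact h2.symm

lemma aux_orth {V : Type*} [Fintype V] [DecidableEq V]
    (b : OrthonormalBasis V ℝ (EuclideanSpace ℝ V)) (i j : V) :
    (WithLp.equiv 2 (V → ℝ)) (b i) ⬝ᵥ (WithLp.equiv 2 (V → ℝ)) (b j)
      = if i = j then 1 else 0 := by
  have h := b.orthonormal
  rw [orthonormal_iff_ite] at h
  have hij := h i j
  rw [← hij]
  rw [PiLp.inner_apply]
  simp [dotProduct, RCLike.inner_apply, mul_comm]

lemma aux_sum_sq {V : Type*} [Fintype V] [DecidableEq V] (M : Matrix V V ℝ) (r : ℝ)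
    (hrow : ∀ x, ∑ y, M x y = r) (hcol : ∀ y, ∑ x, M x y = r) (g : V → ℝ) :
    ∑ x, ∑ y, M x y * (g x - g y) ^ 2
      = 2 * (g ⬝ᵥ ((r • (1 : Matrix V V ℝ) - M) *ᵥ g)) := by
  have hdot : g ⬝ᵥ ((r • (1 : Matrix V V ℝ) - M) *ᵥ g)
      = r * (∑ x, g x ^ 2) - ∑ x, ∑ y, M x y * g x * g y := by
    rw [sub_mulVec, dotProduct_sub, smul_mulVec, one_mulVec, dotProduct_smul]
    congr 1
    · show r • (g ⬝ᵥ g) = _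
      rw [smul_eq_mul]
      congr 1
      simp [dotProduct, sq]
    · simp only [dotProduct, Matrix.mulVec, Finset.mul_sum]
      refine Finset.sum_congr rfl fun x _ => Finset.sum_congr rfl fun y _ => ?_
      ring
  have h2 : ∑ x, ∑ y, M x y * g y ^ 2 = r * ∑ x, g x ^ 2 := by
    rw [Finset.sum_comm, Finset.mul_sum]
    refine Finset.sum_congr rfl fun y _ => ?_
    rw [← Finset.sum_mul, hcol]
  have e1 : ∀ x, ∑ y, M x y * (g x - g y) ^ 2
      = r * g x ^ 2 + (∑ y, M x y * g y ^ 2) - 2 * ∑ y, M x y * g x * g y := by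
    intro x
    have hterm : ∀ y, M x y * (g x - g y) ^ 2
        = M x y * g x ^ 2 + M x y * g y ^ 2 - 2 * (M x y * g x * g y) := fun y => by ring
    rw [Finset.sum_congr rfl fun y _ => hterm y]
    rw [Finset.sum_sub_distrib, Finset.sum_add_distrib, ← Finset.sum_mul, hrow,
      ← Finset.mul_sum]
  rw [Finset.sum_congr rfl fun x _ => e1 x]
  rw [Finset.sum_sub_distrib, Finset.sum_add_distrib, ← Finset.mul_sum, ← Finset.mul_sum,
    h2, hdot]
  ring


set_option maxHeartbeats 1000000 in
theorem stmt0 {V : Type*} [Fintype V] [DecidableEq V] (G : SimpleGraph V)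
    (hreg : IsDistanceRegular G) (n : ℕ) (hn : 1 ≤ n)
    (hdiam_le : ∀ x y : V, G.dist x y ≤ n) (hdiam_eq : ∃ x y : V, G.dist x y = n)
    (v : ℕ → Polynomial ℝ)
    (hv : ∀ i ≤ n, distAdjMatrix G i = Polynomial.aeval (distAdjMatrix G 1) (v i))
    (θ : Fin (n + 1) → ℝ) (hθ : StrictAnti θ)
    (hspec : spectrum ℝ (distAdjMatrix G 1) = Set.range θ) :
    leastDistortion G ^ 2 ≥
      ((n : ℝ) ^ 2 * (v n).eval (θ 0) / (v 1).eval (θ 0)) *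
        sInf {r : ℝ | ∃ j : Fin (n + 1), j ≠ 0 ∧ (v n).eval (θ j) ≠ (v n).eval (θ 0) ∧
          r = ((v 1).eval (θ 0) - (v 1).eval (θ j)) /
              ((v n).eval (θ 0) - (v n).eval (θ j))} := by
  classical
  obtain ⟨x₀, y₀, hxy⟩ := hdiam_eq
  have hVne : Nonempty V := ⟨x₀⟩
  set A : ℕ → Matrix V V ℝ := distAdjMatrix G with hA_def
  have hAval : ∀ i (x y : V), A i x y = if G.dist x y = i then 1 else 0 := fun i x y => rfl
  have hAnn : ∀ i (x y : V), 0 ≤ A i x y := by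
    intro i x y
    rw [hAval]
    split <;> norm_num
  have hAcomm : ∀ i (x y : V), A i x y = A i y x := by
    intro i x y
    rw [hAval, hAval, SimpleGraph.dist_comm]
  -- the degree
  obtain ⟨a₀, kdeg, c₀, hk0⟩ := hreg.2 0
  set k : ℝ := (kdeg : ℝ) with hk_def
  have hrow1 : ∀ x : V, ∑ y, A 1 x y = k := by
    intro x
    have h0 := (hk0 x x (SimpleGraph.dist_self)).2.1
    have hcard : Nat.card {z : V // G.dist x z = 1 ∧ G.dist z x = 0 + 1}
        = Nat.card {z : V // G.dist x z = 1} := by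
      refine Nat.card_congr (Equiv.subtypeEquivRight fun z => ?_)
      constructor
      · exact fun h => h.1
      · exact fun h => ⟨h, by rw [SimpleGraph.dist_comm]; simpa using h⟩
    rw [hcard] at h0
    rw [Nat.card_eq_fintype_card, Fintype.card_subtype] at h0
    have hsum : ∑ y, A 1 x y = ((Finset.univ.filter fun z => G.dist x z = 1).card : ℝ) := by
      rw [Finset.card_filter]
      push_cast
      exact Finset.sum_congr rfl fun y _ => hAval 1 x y
    rw [hsum, h0]
  have hone : (fun _ : V => (1:ℝ)) ≠ 0 := by
    intro h
    have := congrFun h x₀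
    norm_num at this
  have h1vec : A 1 *ᵥ (fun _ : V => (1:ℝ)) = k • (fun _ : V => (1:ℝ)) := by
    funext x
    simp only [Matrix.mulVec, dotProduct, mul_one, Pi.smul_apply, smul_eq_mul, mul_one]
    rw [hrow1 x]
  have hvec : ∀ i, i ≤ n → A i *ᵥ (fun _ : V => (1:ℝ))
      = (v i).eval k • (fun _ : V => (1:ℝ)) := by
    intro i hi
    rw [show A i = aeval (A 1) (v i) from hv i hi]
    exact aux_aeval_mulVec _ _ _ h1vec (v i)
  have hrow : ∀ i, i ≤ n → ∀ x : V, ∑ y, A i x y = (v i).eval k := by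
    intro i hi x
    have hx := congrFun (hvec i hi) x
    simp only [Matrix.mulVec, dotProduct, mul_one, Pi.smul_apply, smul_eq_mul, mul_one] at hx
    exact hx
  have hkspec : k ∈ spectrum ℝ (A 1) := (aux_mem_spectrum_iff _ _).2 ⟨_, hone, h1vec⟩
  rw [hspec] at hkspec
  obtain ⟨j₀, hj₀⟩ := hkspec
  have heig : ∀ j : Fin (n+1), ∃ u : V → ℝ, u ≠ 0 ∧ A 1 *ᵥ u = θ j • u := by
    intro j
    exact (aux_mem_spectrum_iff _ _).1 (hspec ▸ Set.mem_range_self j)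
  have hθ0k : θ 0 = k := by
    obtain ⟨u, hu, hue⟩ := heig 0
    have h1 : θ 0 ≤ k := (abs_le.1 (aux_perron (A 1) (hAnn 1) k hrow1 _ _ hu hue)).2
    have h2 : k ≤ θ 0 := hj₀ ▸ hθ.antitone (Fin.zero_le j₀)
    linarith
  have hv1θ : ∀ j : Fin (n+1), (v 1).eval (θ j) = θ j := by
    intro j
    obtain ⟨u, hu, hue⟩ := heig j
    have h2 : A 1 *ᵥ u = (v 1).eval (θ j) • u := by
      conv_lhs => rw [show A 1 = aeval (A 1) (v 1) from hv 1 hn]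
      exact aux_aeval_mulVec _ _ _ hue (v 1)
    rw [hue] at h2
    obtain ⟨x, hx⟩ := Function.ne_iff.1 hu
    have h3 := congrFun h2 x
    simp only [Pi.smul_apply, smul_eq_mul] at h3
    exact (mul_right_cancel₀ hx h3).symm
  set kn : ℝ := (v n).eval k with hkn_def
  have hvn_le : ∀ j : Fin (n+1), (v n).eval (θ j) ≤ kn := by
    intro j
    obtain ⟨u, hu, hue⟩ := heig j
    have h2 : A n *ᵥ u = (v n).eval (θ j) • u := by
      rw [show A n = aeval (A 1) (v n) from hv n le_rfl]
      exact aux_aeval_mulVec _ _ _ hue (v n)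
    exact (abs_le.1 (aux_perron (A n) (hAnn n) kn (hrow n le_rfl) _ _ hu h2)).2
  have hkn1 : (1:ℝ) ≤ kn := by
    have h5 : A n x₀ y₀ = 1 := by rw [hAval, if_pos hxy]
    have h6 : A n x₀ y₀ ≤ ∑ y, A n x₀ y := Finset.single_le_sum (f := fun y => A n x₀ y)
      (fun y _ => hAnn n x₀ y) (Finset.mem_univ y₀)
    rw [hrow n le_rfl x₀, h5] at h6
    exact h6
  have hk1 : (1:ℝ) ≤ k := by
    have hne0 : G.dist x₀ y₀ ≠ 0 := by rw [hxy]; omega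
    obtain ⟨p, hp⟩ := SimpleGraph.exists_walk_of_dist_ne_zero hne0
    cases p with
    | nil =>
        rw [SimpleGraph.dist_self] at hxy
        omega
    | @cons _ z _ hadj q =>
        have hz : G.dist x₀ z = 1 := SimpleGraph.dist_eq_one_iff_adj.2 hadj
        have h5 : A 1 x₀ z = 1 := by rw [hAval, if_pos hz]
        have h6 : A 1 x₀ z ≤ ∑ y, A 1 x₀ y := Finset.single_le_sum (f := fun y => A 1 x₀ y)
          (fun y _ => hAnn 1 x₀ y) (Finset.mem_univ z)
        rw [hrow1 x₀, h5] at h6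
        exact h6
  have hkpos : (0:ℝ) < k := lt_of_lt_of_le one_pos hk1
  have hknpos : (0:ℝ) < kn := lt_of_lt_of_le one_pos hkn1
  have hv1θ0 : (v 1).eval (θ 0) = k := by rw [hv1θ 0, hθ0k]
  have hvnθ0 : (v n).eval (θ 0) = kn := by rw [hθ0k]
  set S : Set ℝ := {r : ℝ | ∃ j : Fin (n + 1), j ≠ 0 ∧ (v n).eval (θ j) ≠ (v n).eval (θ 0) ∧
          r = ((v 1).eval (θ 0) - (v 1).eval (θ j)) /
              ((v n).eval (θ 0) - (v n).eval (θ j))} with hS_def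
  rw [ge_iff_le, hv1θ0, hvnθ0]
  have hSpos : ∀ r ∈ S, 0 < r := by
    rintro r ⟨j, hj0, hjne, rfl⟩
    have hj : θ j < θ 0 := hθ (Fin.pos_of_ne_zero hj0)
    have hnum : 0 < (v 1).eval (θ 0) - (v 1).eval (θ j) := by
      rw [hv1θ 0, hv1θ j]
      linarith
    have hden : 0 < (v n).eval (θ 0) - (v n).eval (θ j) := by
      have h9 := hvn_le j
      rw [hvnθ0]
      rw [hvnθ0] at hjne
      cases lt_or_eq_of_le h9 with
      | inl h => linarith
      | inr h => exact absurd h hjne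
    exact div_pos hnum hden
  have hSbdd : BddBelow S := ⟨0, fun r hr => (hSpos r hr).le⟩
  set C := sInf S with hC_def
  rcases le_or_gt C 0 with hC | hC
  · have h1 : (n:ℝ) ^ 2 * kn / k * C ≤ 0 :=
      mul_nonpos_of_nonneg_of_nonpos (by positivity) hC
    calc (n:ℝ) ^ 2 * kn / k * C ≤ 0 := h1
      _ ≤ leastDistortion G ^ 2 := sq_nonneg _
  have hSne : S.Nonempty := by
    by_contra h
    rw [Set.not_nonempty_iff_eq_empty] at h
    rw [hC_def, h, Real.sInf_empty] at hC
    exact lt_irrefl 0 hC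
  -- the key per-embedding bound
  have hkey : ∀ D : ℝ, (∃ (m : ℕ) (ρ : V → EuclideanSpace ℝ (Fin m)),
      ∀ x y : V, (G.dist x y : ℝ) ≤ ‖ρ x - ρ y‖ ∧ ‖ρ x - ρ y‖ ≤ D * (G.dist x y : ℝ)) →
      (n:ℝ) ^ 2 * kn / k * C ≤ D ^ 2 ∧ 1 ≤ D := by
    rintro D ⟨m, ρ, hρ⟩
    have hn' : (0:ℝ) < (n:ℝ) := by exact_mod_cast hn
    have hDpos : 1 ≤ D := by
      have h1 := (hρ x₀ y₀).1
      have h2 := (hρ x₀ y₀).2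
      rw [hxy] at h1 h2
      nlinarith
    refine ⟨?_, hDpos⟩
    set g : Fin m → V → ℝ := fun c x => ρ x c with hg_def
    have hnormsq : ∀ x y : V, ‖ρ x - ρ y‖ ^ 2 = ∑ c, (g c x - g c y) ^ 2 := by
      intro x y
      rw [EuclideanSpace.norm_eq]
      rw [Real.sq_sqrt (Finset.sum_nonneg fun c _ => sq_nonneg _)]
      refine Finset.sum_congr rfl fun c _ => ?_
      rw [Real.norm_eq_abs, sq_abs]
      rfl
    set Sn : ℝ := ∑ x, ∑ y, A n x y * ‖ρ x - ρ y‖ ^ 2 with hSn_def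
    set S1 : ℝ := ∑ x, ∑ y, A 1 x y * ‖ρ x - ρ y‖ ^ 2 with hS1_def
    set N : ℝ := (Fintype.card V : ℝ) with hN_def
    have hNpos : 0 < N := by
      rw [hN_def]
      exact_mod_cast Fintype.card_pos
    have hstep1 : (n:ℝ) ^ 2 * (N * kn) ≤ Sn := by
      have e1 : ∑ x : V, ∑ y, A n x y * (n:ℝ) ^ 2 = (n:ℝ) ^ 2 * (N * kn) := by
        have e2 : ∀ x : V, ∑ y, A n x y * (n:ℝ) ^ 2 = kn * (n:ℝ) ^ 2 := by
          intro x
          rw [← Finset.sum_mul, hrow n le_rfl]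
        rw [Finset.sum_congr rfl fun x _ => e2 x, Finset.sum_const, Finset.card_univ,
          nsmul_eq_mul, hN_def]
        ring
      rw [← e1, hSn_def]
      refine Finset.sum_le_sum fun x _ => Finset.sum_le_sum fun y _ => ?_
      by_cases hd : G.dist x y = n
      · rw [hAval, if_pos hd]
        have h1 := (hρ x y).1
        rw [hd] at h1
        have h3 : (n:ℝ) ^ 2 ≤ ‖ρ x - ρ y‖ ^ 2 := by nlinarith
        linarith
      · rw [hAval, if_neg hd]
        simp
    have hstep2 : S1 ≤ D ^ 2 * (N * k) := by
      have e1 : ∑ x : V, ∑ y, A 1 x y * D ^ 2 = D ^ 2 * (N * k) := by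
        have e2 : ∀ x : V, ∑ y, A 1 x y * D ^ 2 = k * D ^ 2 := by
          intro x
          rw [← Finset.sum_mul, hrow1]
        rw [Finset.sum_congr rfl fun x _ => e2 x, Finset.sum_const, Finset.card_univ,
          nsmul_eq_mul, hN_def]
        ring
      rw [← e1, hS1_def]
      refine Finset.sum_le_sum fun x _ => Finset.sum_le_sum fun y _ => ?_
      by_cases hd : G.dist x y = 1
      · rw [hAval, if_pos hd]
        have h1 := (hρ x y).1
        have h2 := (hρ x y).2
        rw [hd] at h1 h2
        push_cast at h1 h2
        nlinarith [norm_nonneg (ρ x - ρ y)]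
      · rw [hAval, if_neg hd]
        simp
    have hherm : (A 1).IsHermitian := by
      rw [Matrix.IsHermitian]
      ext x y
      rw [Matrix.conjTranspose_apply, star_trivial]
      exact hAcomm 1 y x
    set b := hherm.eigenvectorBasis with hb_def
    set μ := hherm.eigenvalues with hμ_def
    set B : V → V → ℝ := fun i => (WithLp.equiv 2 (V → ℝ)) (b i) with hB_def
    have hBeig : ∀ i, A 1 *ᵥ B i = μ i • B i := fun i => hherm.mulVec_eigenvectorBasis i
    have horth : ∀ i j, B i ⬝ᵥ B j = if i = j then 1 else 0 := fun i j => aux_orth b i j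
    set P : Matrix V V ℝ := kn • (1 : Matrix V V ℝ) - A n with hP_def
    set Q : Matrix V V ℝ := k • (1 : Matrix V V ℝ) - A 1 with hQ_def
    have hPeig : ∀ i, P *ᵥ B i = (kn - (v n).eval (μ i)) • B i := by
      intro i
      rw [hP_def, sub_mulVec, smul_mulVec, one_mulVec]
      rw [show A n = aeval (A 1) (v n) from hv n le_rfl]
      rw [aux_aeval_mulVec _ _ _ (hBeig i) (v n), sub_smul]
    have hQeig : ∀ i, Q *ᵥ B i = (k - μ i) • B i := by
      intro i
      rw [hQ_def, sub_mulVec, smul_mulVec, one_mulVec, hBeig i, sub_smul]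
    have hpq : ∀ i, kn - (v n).eval (μ i) ≤ (1/C) * (k - μ i) := by
      intro i
      have hμspec : μ i ∈ spectrum ℝ (A 1) := hherm.eigenvalues_mem_spectrum_real i
      rw [hspec] at hμspec
      obtain ⟨j, hj⟩ := hμspec
      rw [← hj]
      have hθle : θ j ≤ k := by
        rw [← hθ0k]
        exact hθ.antitone (Fin.zero_le j)
      by_cases hvne : (v n).eval (θ j) = kn
      · rw [hvne, sub_self]
        have : (0:ℝ) ≤ (1/C) * (k - θ j) :=
          mul_nonneg (by positivity) (by linarith)
        exact this
      · have hjne0 : j ≠ 0 := by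
          intro h
          rw [h] at hvne
          exact hvne hvnθ0
        have hrS : ((v 1).eval (θ 0) - (v 1).eval (θ j)) /
            ((v n).eval (θ 0) - (v n).eval (θ j)) ∈ S :=
          ⟨j, hjne0, by rw [hvnθ0]; exact hvne, rfl⟩
        have hCle := csInf_le hSbdd hrS
        have hd : 0 < kn - (v n).eval (θ j) := by
          cases lt_or_eq_of_le (hvn_le j) with
          | inl h => linarith
          | inr h => exact absurd h hvne
        rw [hv1θ0, hv1θ j, hvnθ0] at hCle
        rw [← hC_def] at hCle
        rw [le_div_iff₀ hd] at hCle
        rw [show (1/C) * (k - θ j) = (k - θ j) / C from by ring, le_div_iff₀ hC]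
        linarith
    have hquad : ∀ gc : V → ℝ, gc ⬝ᵥ (P *ᵥ gc) ≤ (1/C) * (gc ⬝ᵥ (Q *ᵥ gc)) := by
      intro gc
      obtain ⟨c, hc⟩ := aux_expansion b gc
      have hc' : gc = ∑ i, c i • B i := hc
      rw [aux_quad_eq P _ c B horth hPeig gc hc', aux_quad_eq Q _ c B horth hQeig gc hc']
      rw [Finset.mul_sum]
      refine Finset.sum_le_sum fun i _ => ?_
      calc (kn - (v n).eval (μ i)) * c i ^ 2
          ≤ ((1/C) * (k - μ i)) * c i ^ 2 :=
            mul_le_mul_of_nonneg_right (hpq i) (sq_nonneg (c i))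
        _ = 1/C * ((k - μ i) * c i ^ 2) := by ring
    have hcoln : ∀ y : V, ∑ x, A n x y = kn := by
      intro y
      rw [Finset.sum_congr rfl fun x _ => hAcomm n x y]
      exact hrow n le_rfl y
    have hcol1 : ∀ y : V, ∑ x, A 1 x y = k := by
      intro y
      rw [Finset.sum_congr rfl fun x _ => hAcomm 1 x y]
      exact hrow1 y
    have hSn_coord : ∀ i, i ≤ n → ∀ r : ℝ, (∀ x, ∑ y, A i x y = r) → (∀ y, ∑ x, A i x y = r) →
        ∑ x, ∑ y, A i x y * ‖ρ x - ρ y‖ ^ 2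
          = ∑ cc : Fin m, 2 * (g cc ⬝ᵥ ((r • (1 : Matrix V V ℝ) - A i) *ᵥ g cc)) := by
      intro i hi r hr hc
      calc ∑ x, ∑ y, A i x y * ‖ρ x - ρ y‖ ^ 2
          = ∑ x, ∑ y, ∑ cc : Fin m, A i x y * (g cc x - g cc y) ^ 2 := by
            refine Finset.sum_congr rfl fun x _ => Finset.sum_congr rfl fun y _ => ?_
            rw [hnormsq x y, Finset.mul_sum]
        _ = ∑ x, ∑ cc : Fin m, ∑ y, A i x y * (g cc x - g cc y) ^ 2 :=
            Finset.sum_congr rfl fun x _ => Finset.sum_comm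
        _ = ∑ cc : Fin m, ∑ x, ∑ y, A i x y * (g cc x - g cc y) ^ 2 := Finset.sum_comm
        _ = ∑ cc : Fin m, 2 * (g cc ⬝ᵥ ((r • (1 : Matrix V V ℝ) - A i) *ᵥ g cc)) :=
            Finset.sum_congr rfl fun cc _ => aux_sum_sq (A i) r hr hc (g cc)
    have hstep3 : Sn ≤ (1/C) * S1 := by
      rw [hSn_def, hS1_def, hSn_coord n le_rfl kn (hrow n le_rfl) hcoln,
        hSn_coord 1 hn k hrow1 hcol1, Finset.mul_sum]
      refine Finset.sum_le_sum fun cc _ => ?_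
      have h9 := hquad (g cc)
      rw [← hP_def, ← hQ_def]
      calc 2 * (g cc ⬝ᵥ (P *ᵥ g cc)) ≤ 2 * ((1/C) * (g cc ⬝ᵥ (Q *ᵥ g cc))) := by linarith
        _ = 1/C * (2 * (g cc ⬝ᵥ (Q *ᵥ g cc))) := by ring
    have hfinal : (n:ℝ) ^ 2 * (N * kn) ≤ (1/C) * (D ^ 2 * (N * k)) := by
      calc (n:ℝ) ^ 2 * (N * kn) ≤ Sn := hstep1
        _ ≤ (1/C) * S1 := hstep3
        _ ≤ (1/C) * (D ^ 2 * (N * k)) := mul_le_mul_of_nonneg_left hstep2 (by positivity)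
    have h7 : C * ((n:ℝ) ^ 2 * (N * kn)) ≤ D ^ 2 * (N * k) := by
      have h8 := mul_le_mul_of_nonneg_left hfinal hC.le
      rw [show C * ((1/C) * (D ^ 2 * (N * k))) = D ^ 2 * (N * k) from by field_simp] at h8
      exact h8
    rw [div_mul_eq_mul_div, div_le_iff₀ hkpos]
    have h9 : N * ((n:ℝ) ^ 2 * kn * C) ≤ N * (D ^ 2 * k) := by
      calc N * ((n:ℝ) ^ 2 * kn * C) = C * ((n:ℝ) ^ 2 * (N * kn)) := by ring
        _ ≤ D ^ 2 * (N * k) := h7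
        _ = N * (D ^ 2 * k) := by ring
    exact le_of_mul_le_mul_left h9 hNpos
  -- existence of an embedding
  have hTel : ∃ (m : ℕ) (ρ : V → EuclideanSpace ℝ (Fin m)),
      ∀ x y : V, (G.dist x y : ℝ) ≤ ‖ρ x - ρ y‖ ∧
        ‖ρ x - ρ y‖ ≤ ((n:ℝ) * Real.sqrt 2) * (G.dist x y : ℝ) := by
    set e := Fintype.equivFin V with he_def
    refine ⟨Fintype.card V, fun x => (WithLp.equiv 2 (Fin (Fintype.card V) → ℝ)).symm
      (fun i => if e x = i then (n:ℝ) else 0), ?_⟩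
    intro x y
    by_cases hxy' : x = y
    · subst hxy'
      simp [SimpleGraph.dist_self]
    · have hsqrt2 : (1:ℝ) ≤ Real.sqrt 2 := by
        rw [show (1:ℝ) = Real.sqrt 1 from (Real.sqrt_one).symm]
        exact Real.sqrt_le_sqrt (by norm_num)
      have hnn : (0:ℝ) ≤ (n:ℝ) := Nat.cast_nonneg n
      have hnorm : ‖(WithLp.equiv 2 (Fin (Fintype.card V) → ℝ)).symm
            (fun i => if e x = i then (n:ℝ) else 0) -
          (WithLp.equiv 2 (Fin (Fintype.card V) → ℝ)).symm
            (fun i => if e y = i then (n:ℝ) else 0)‖ = (n:ℝ) * Real.sqrt 2 := by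
        rw [EuclideanSpace.norm_eq]
        have hterm : ∀ i, ‖((WithLp.equiv 2 (Fin (Fintype.card V) → ℝ)).symm
              (fun i => if e x = i then (n:ℝ) else 0) -
            (WithLp.equiv 2 (Fin (Fintype.card V) → ℝ)).symm
              (fun i => if e y = i then (n:ℝ) else 0)) i‖ ^ 2
            = (if e x = i then (n:ℝ) ^ 2 else 0) + (if e y = i then (n:ℝ) ^ 2 else 0) := by
          intro i
          rw [Real.norm_eq_abs, sq_abs]
          have : ((WithLp.equiv 2 (Fin (Fintype.card V) → ℝ)).symm
              (fun i => if e x = i then (n:ℝ) else 0) -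
            (WithLp.equiv 2 (Fin (Fintype.card V) → ℝ)).symm
              (fun i => if e y = i then (n:ℝ) else 0)) i
              = (if e x = i then (n:ℝ) else 0) - (if e y = i then (n:ℝ) else 0) := rfl
          rw [this]
          by_cases h1 : e x = i <;> by_cases h2 : e y = i
          · exact absurd (e.injective (h1.trans h2.symm)) hxy'
          · simp [h1, h2]
          · simp [h1, h2]
          · simp [h1, h2]
        rw [Finset.sum_congr rfl fun i _ => hterm i, Finset.sum_add_distrib]
        rw [Finset.sum_ite_eq Finset.univ (e x) (fun _ => (n:ℝ) ^ 2),
          Finset.sum_ite_eq Finset.univ (e y) (fun _ => (n:ℝ) ^ 2)]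
        simp only [Finset.mem_univ, if_pos]
        rw [show (n:ℝ) ^ 2 + (n:ℝ) ^ 2 = (n:ℝ) ^ 2 * 2 from by ring]
        rw [Real.sqrt_mul (sq_nonneg _), Real.sqrt_sq hnn]
      rw [hnorm]
      have hd1 : 1 ≤ G.dist x y := by
        have hne : G.dist x y ≠ 0 := by
          rw [SimpleGraph.dist_ne_zero_iff_ne_and_reachable]
          exact ⟨hxy', hreg.1.preconnected x y⟩
        omega
      have hd1' : (1:ℝ) ≤ (G.dist x y : ℝ) := by exact_mod_cast hd1
      have hdn : (G.dist x y : ℝ) ≤ (n:ℝ) := by exact_mod_cast hdiam_le x y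
      constructor
      · nlinarith
      · nlinarith [mul_nonneg hnn (Real.sqrt_nonneg 2)]
  have hRHSnn : 0 ≤ (n:ℝ) ^ 2 * kn / k * C := by positivity
  have hLDlow : Real.sqrt ((n:ℝ) ^ 2 * kn / k * C) ≤ leastDistortion G := by
    unfold leastDistortion
    refine le_csInf ⟨(n:ℝ) * Real.sqrt 2, hTel⟩ ?_
    rintro D hD
    obtain ⟨h1, h2⟩ := hkey D hD
    calc Real.sqrt ((n:ℝ) ^ 2 * kn / k * C) ≤ Real.sqrt (D ^ 2) := Real.sqrt_le_sqrt h1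
      _ = D := Real.sqrt_sq (by linarith)
  calc (n:ℝ) ^ 2 * kn / k * C = Real.sqrt ((n:ℝ) ^ 2 * kn / k * C) ^ 2 :=
      (Real.sq_sqrt hRHSnn).symm
    _ ≤ leastDistortion G ^ 2 := pow_le_pow_left₀ (Real.sqrt_nonneg _) hLDlow 2
end

section
/- Let G be a distance regular graph with diameter n ≥ 1, with i-th degrees k_i and adjacency matrices A_0 = I, A_1, …, A_n. If α ∈ ℝ is such that the matrix Q_α = (k_1 − α·k_n)·A_0 − A_1 + α·A_n is positive semidefinite, then c_2(G)^2 ≥ n^2 · k_n · α / k_1. -/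
open scoped BigOperators

/-!
Since `Aᵢ 𝟙 = kᵢ 𝟙`, the matrix `Q_α` has zero row sums. Expanding `‖ρ x - ρ y‖²` then gives
`∑ Q_α(x,y) ‖ρ x - ρ y‖² = -2 ∑ Q_α(x,y) ⟪ρ x, ρ y⟫ ≤ 0` for every map `ρ` into Euclidean space,
that is `α ∑_{d(x,y)=n} ‖ρ x - ρ y‖² ≤ ∑_{d(x,y)=1} ‖ρ x - ρ y‖²`. For an embedding of
distortion `D` the left side is at least `α |V| kₙ n²` and the right side at most `|V| k₁ D²`.
-/

open Finset Matrix
open scoped MatrixOrder InnerProductSpace Matrix.Norms.L2Operator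

section QuadraticForm

variable {V E : Type*} [Fintype V] [NormedAddCommGroup E] [InnerProductSpace ℝ E]

theorem Matrix.PosSemidef.sum_mul_inner_nonneg {Q : Matrix V V ℝ} (hQ : Q.PosSemidef)
    (ρ : V → E) : 0 ≤ ∑ x, ∑ y, Q x y * ⟪ρ x, ρ y⟫_ℝ := by
  classical
  obtain ⟨B, rfl⟩ := CStarAlgebra.nonneg_iff_eq_star_mul_self.mp hQ.nonneg
  have : ∑ z, ‖∑ x, B z x • ρ x‖ ^ 2 = ∑ x, ∑ y, (star B * B) x y * ⟪ρ x, ρ y⟫_ℝ := by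
    simp only [← real_inner_self_eq_norm_sq, sum_inner, inner_sum, real_inner_smul_left,
      real_inner_smul_right, mul_apply, star_apply, star_trivial, sum_mul]
    rw [sum_comm]
    refine sum_congr rfl fun x _ => ?_
    rw [sum_comm]
    refine sum_congr rfl fun y _ => sum_congr rfl fun z _ => ?_
    rw [real_inner_comm]
    ring
  exact this ▸ sum_nonneg fun z _ => sq_nonneg _

theorem Matrix.PosSemidef.sum_mul_norm_sub_sq_nonpos {Q : Matrix V V ℝ} (hQ : Q.PosSemidef)
    (hQ1 : ∀ x, ∑ y, Q x y = 0) (ρ : V → E) :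
    ∑ x, ∑ y, Q x y * ‖ρ x - ρ y‖ ^ 2 ≤ 0 := by
  have hQ1' : ∀ y, ∑ x, Q x y = 0 := fun y => by
    simpa only [← hQ.isHermitian.apply y, star_trivial] using hQ1 y
  have : ∑ x, ∑ y, Q x y * ‖ρ x - ρ y‖ ^ 2 = -2 * ∑ x, ∑ y, Q x y * ⟪ρ x, ρ y⟫_ℝ := by
    simp only [norm_sub_sq_real, mul_add, mul_sub, sum_add_distrib, sum_sub_distrib, ← sum_mul,
      hQ1, zero_mul, sum_const_zero]
    rw [sum_comm (f := fun x y => Q x y * ‖ρ y‖ ^ 2)]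
    simp only [← sum_mul, hQ1', zero_mul, sum_const_zero, mul_left_comm _ (2 : ℝ), ← mul_sum]
    ring
  linarith [hQ.sum_mul_inner_nonneg ρ]

end QuadraticForm

theorem EuclideanSpace.norm_single_one_sub_single_one {ι : Type*} [Fintype ι] [DecidableEq ι]
    {i j : ι} (hij : i ≠ j) :
    ‖EuclideanSpace.single i (1 : ℝ) - EuclideanSpace.single j 1‖ = √2 := by
  rw [← Real.sqrt_sq (norm_nonneg _), norm_sub_sq_real]
  norm_num [EuclideanSpace.inner_single_left, hij]

namespace SimpleGraph

variable {V : Type*} (G : SimpleGraph V)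

def IsEmbeddingWithDistortion {m : ℕ} (ρ : V → EuclideanSpace ℝ (Fin m)) (D : ℝ) : Prop :=
  ∀ x y : V, (G.dist x y : ℝ) ≤ ‖ρ x - ρ y‖ ∧ ‖ρ x - ρ y‖ ≤ D * G.dist x y

variable {G}

theorem IsEmbeddingWithDistortion.one_le {m : ℕ} {ρ : V → EuclideanSpace ℝ (Fin m)} {D : ℝ}
    (hρ : G.IsEmbeddingWithDistortion ρ D) {x y : V} (hxy : G.dist x y ≠ 0) : 1 ≤ D := by
  have hpos : (0 : ℝ) < G.dist x y := by exact_mod_cast Nat.pos_of_ne_zero hxy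
  have := (hρ x y).1.trans (hρ x y).2
  exact (le_mul_iff_one_le_left hpos).mp (by simpa using this)

theorem Connected.isEmbeddingWithDistortion_smul_single [Fintype V] (hG : G.Connected) {n : ℕ}
    (hn : ∀ x y, G.dist x y ≤ n) :
    G.IsEmbeddingWithDistortion
      (fun x => (n : ℝ) • EuclideanSpace.single (Fintype.equivFin V x) (1 : ℝ)) (n * √2) := by
  intro x y
  rcases eq_or_ne x y with rfl | hxy
  · simp
  have hnorm : ‖(n : ℝ) • EuclideanSpace.single (Fintype.equivFin V x) (1 : ℝ) -
      (n : ℝ) • EuclideanSpace.single (Fintype.equivFin V y) 1‖ = n * √2 := by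
    rw [← smul_sub, norm_smul, Real.norm_natCast,
      EuclideanSpace.norm_single_one_sub_single_one ((Fintype.equivFin V).injective.ne hxy)]
  have hd1 : (1 : ℝ) ≤ G.dist x y := by exact_mod_cast hG.pos_dist_of_ne hxy
  have hdn : (G.dist x y : ℝ) ≤ n := by exact_mod_cast hn x y
  have h2 : (1 : ℝ) ≤ √2 := Real.one_le_sqrt.mpr one_le_two
  rw [hnorm]
  exact ⟨hdn.trans (le_mul_of_one_le_right n.cast_nonneg h2),
    le_mul_of_one_le_right (by positivity) hd1⟩

theorem card_filter_dist_eq [Fintype V] (i : ℕ) (x : V) :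
    #{y | G.dist x y = i} = Nat.card {y // G.dist x y = i} := by
  rw [Nat.card_eq_fintype_card, Fintype.card_subtype]

end SimpleGraph

section

variable {V : Type*} [Fintype V] {G : SimpleGraph V}

theorem le_leastDistortion_sq {B : ℝ}
    (hne : ∃ (m : ℕ) (ρ : V → EuclideanSpace ℝ (Fin m)) (D : ℝ), G.IsEmbeddingWithDistortion ρ D)
    (hB : ∀ (m : ℕ) (ρ : V → EuclideanSpace ℝ (Fin m)) (D : ℝ),
      G.IsEmbeddingWithDistortion ρ D → 0 ≤ D ∧ B ≤ D ^ 2) :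
    B ≤ leastDistortion G ^ 2 := by
  obtain ⟨m, ρ, D, hρ⟩ := hne
  have : √B ≤ leastDistortion G :=
    le_csInf ⟨D, m, ρ, hρ⟩ fun D ⟨m, ρ, hρ⟩ => Real.sqrt_le_iff.mpr (hB m ρ D hρ)
  exact (Real.sqrt_le_iff.mp this).2

theorem distAdjMatrix_zero [DecidableEq V] (hG : G.Connected) : distAdjMatrix G 0 = 1 := by
  ext x y
  simp [distAdjMatrix, Matrix.one_apply, hG.dist_eq_zero_iff]

theorem sum_distAdjMatrix_mul (i : ℕ) (x : V) (f : V → ℝ) :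
    ∑ y, distAdjMatrix G i x y * f y = ∑ y with G.dist x y = i, f y := by
  simp [distAdjMatrix, ← sum_filter]

theorem sum_distAdjMatrix_apply (i : ℕ) (x : V) :
    ∑ y, distAdjMatrix G i x y = Nat.card {y // G.dist x y = i} := by
  simpa [SimpleGraph.card_filter_dist_eq] using sum_distAdjMatrix_mul (G := G) i x 1

end

namespace SimpleGraph.IsEmbeddingWithDistortion

variable {V : Type*} [Fintype V] {G : SimpleGraph V} {m : ℕ} {ρ : V → EuclideanSpace ℝ (Fin m)}
  {D : ℝ}

theorem sum_distAdjMatrix_mul_norm_sub_sq_le (hρ : G.IsEmbeddingWithDistortion ρ D) (i : ℕ)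
    (x : V) :
    ∑ y, distAdjMatrix G i x y * ‖ρ x - ρ y‖ ^ 2 ≤
      Nat.card {y // G.dist x y = i} * (D * i) ^ 2 := by
  rw [sum_distAdjMatrix_mul, ← card_filter_dist_eq, ← nsmul_eq_mul]
  refine sum_le_card_nsmul _ _ _ fun y hy => ?_
  have hdist := (hρ x y).2
  rw [(mem_filter.mp hy).2] at hdist
  exact pow_le_pow_left₀ (norm_nonneg _) hdist 2

theorem le_sum_distAdjMatrix_mul_norm_sub_sq (hρ : G.IsEmbeddingWithDistortion ρ D) (i : ℕ)
    (x : V) :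
    Nat.card {y // G.dist x y = i} * (i : ℝ) ^ 2 ≤
      ∑ y, distAdjMatrix G i x y * ‖ρ x - ρ y‖ ^ 2 := by
  rw [sum_distAdjMatrix_mul, ← card_filter_dist_eq, ← nsmul_eq_mul]
  refine card_nsmul_le_sum _ _ _ fun y hy => ?_
  have hdist := (hρ x y).1
  rw [(mem_filter.mp hy).2] at hdist
  exact pow_le_pow_left₀ i.cast_nonneg hdist 2

theorem sq_mul_mul_le_mul_sq_of_posSemidef [Nonempty V] (hρ : G.IsEmbeddingWithDistortion ρ D)
    (hG : G.Connected) {k : ℕ → ℕ} (hk : ∀ (i : ℕ) (x : V), Nat.card {y // G.dist x y = i} = k i)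
    {n : ℕ} {α : ℝ} (hpsd : (((k 1 : ℝ) - α * k n) • distAdjMatrix G 0 - distAdjMatrix G 1 +
        α • distAdjMatrix G n).PosSemidef) :
    (n : ℝ) ^ 2 * k n * α ≤ k 1 * D ^ 2 := by
  classical
  rcases le_or_gt α 0 with hα | hα
  · exact (mul_nonpos_of_nonneg_of_nonpos (by positivity) hα).trans (by positivity)
  rw [distAdjMatrix_zero hG] at hpsd
  set energy : ℕ → ℝ := fun i => ∑ x, ∑ y, distAdjMatrix G i x y * ‖ρ x - ρ y‖ ^ 2
  have hrow : ∀ x, ∑ y, (((k 1 : ℝ) - α * k n) • (1 : Matrix V V ℝ) - distAdjMatrix G 1 +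
      α • distAdjMatrix G n) x y = 0 := by
    intro x
    simp only [Matrix.add_apply, Matrix.sub_apply, Matrix.smul_apply, smul_eq_mul, one_apply,
      sum_add_distrib, sum_sub_distrib, ← mul_sum, sum_distAdjMatrix_apply, hk, sum_ite_eq,
      mem_univ, if_true]
    ring
  have hform : ∑ x, ∑ y, (((k 1 : ℝ) - α * k n) • (1 : Matrix V V ℝ) - distAdjMatrix G 1 +
      α • distAdjMatrix G n) x y * ‖ρ x - ρ y‖ ^ 2 = α * energy n - energy 1 := by
    have hdiag : ∑ x, ∑ y, (1 : Matrix V V ℝ) x y * ‖ρ x - ρ y‖ ^ 2 = 0 := by simp [one_apply]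
    simp only [Matrix.add_apply, Matrix.sub_apply, Matrix.smul_apply, smul_eq_mul, add_mul,
      sub_mul, mul_assoc, sum_add_distrib, sum_sub_distrib, ← mul_sum, hdiag, energy]
    ring
  have hupper : energy 1 ≤ Fintype.card V * (k 1 * D ^ 2) := by
    calc energy 1 ≤ ∑ _x : V, (k 1 * D ^ 2 : ℝ) :=
          sum_le_sum fun x _ => by
            simpa only [hk, Nat.cast_one, mul_one] using hρ.sum_distAdjMatrix_mul_norm_sub_sq_le 1 x
      _ = _ := by simp
  have hlower : Fintype.card V * (k n * n ^ 2) ≤ energy n := by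
    calc (Fintype.card V * (k n * n ^ 2) : ℝ) = ∑ _x : V, (k n * n ^ 2 : ℝ) := by simp
      _ ≤ energy n :=
          sum_le_sum fun x _ => by simpa only [hk] using hρ.le_sum_distAdjMatrix_mul_norm_sub_sq n x
  have hnonpos := hpsd.sum_mul_norm_sub_sq_nonpos hrow ρ
  refine le_of_mul_le_mul_left ?_ (Nat.cast_pos.mpr (Fintype.card_pos (α := V)))
  calc (Fintype.card V : ℝ) * (n ^ 2 * k n * α) = α * (Fintype.card V * (k n * n ^ 2)) := by ring
    _ ≤ α * energy n := mul_le_mul_of_nonneg_left hlower hα.le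
    _ ≤ energy 1 := by linarith
    _ ≤ _ := hupper

end SimpleGraph.IsEmbeddingWithDistortion

theorem stmt1_general {V : Type*} [Fintype V] (G : SimpleGraph V)
    (hreg : IsDistanceRegular G) (n : ℕ) (hn : 1 ≤ n)
    (hdiam_le : ∀ x y : V, G.dist x y ≤ n) (hdiam_eq : ∃ x y : V, G.dist x y = n)
    (k : ℕ → ℕ) (hk : ∀ (i : ℕ) (x : V), Nat.card {y : V // G.dist x y = i} = k i)
    (α : ℝ)
    (hpsd : (((k 1 : ℝ) - α * (k n : ℝ)) • distAdjMatrix G 0 - distAdjMatrix G 1 +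
        α • distAdjMatrix G n).PosSemidef) :
    leastDistortion G ^ 2 ≥ (n : ℝ) ^ 2 * (k n : ℝ) * α / (k 1 : ℝ) := by
  obtain ⟨a, b, hab⟩ := hdiam_eq
  have : Nonempty V := ⟨a⟩
  refine le_leastDistortion_sq ⟨_, _, _, hreg.1.isEmbeddingWithDistortion_smul_single hdiam_le⟩
    fun m ρ D hρ => ⟨zero_le_one.trans (hρ.one_le (x := a) (y := b) (by omega)), ?_⟩
  exact div_le_of_le_mul₀ (Nat.cast_nonneg _) (sq_nonneg D)
    (by simpa only [mul_comm (D ^ 2)] using hρ.sq_mul_mul_le_mul_sq_of_posSemidef hreg.1 hk hpsd)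

theorem stmt1 {V : Type*} [Fintype V] [DecidableEq V] (G : SimpleGraph V)
    (hreg : IsDistanceRegular G) (n : ℕ) (hn : 1 ≤ n)
    (hdiam_le : ∀ x y : V, G.dist x y ≤ n) (hdiam_eq : ∃ x y : V, G.dist x y = n)
    (k : ℕ → ℕ) (hk : ∀ (i : ℕ) (x : V), Nat.card {y : V // G.dist x y = i} = k i)
    (α : ℝ)
    (hpsd : (((k 1 : ℝ) - α * (k n : ℝ)) • distAdjMatrix G 0 - distAdjMatrix G 1 +
        α • distAdjMatrix G n).PosSemidef) :
    leastDistortion G ^ 2 ≥ (n : ℝ) ^ 2 * (k n : ℝ) * α / (k 1 : ℝ) :=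
  stmt1_general G hreg n hn hdiam_le hdiam_eq k hk α hpsd
end

section
/- Let G = (V,E) be a distance regular graph with shortest-path metric d, let D ≥ 1, and let Q = (q_{xy}) ∈ ℝ^{V×V} be a positive semidefinite matrix satisfying d(x,y)^2 ≤ q_{xx} − 2q_{xy} + q_{yy} ≤ D^2·d(x,y)^2 for all x,y ∈ V. For 0 ≤ i ≤ diam G let M_i = {(x,y) ∈ V×V : d(x,y) = i}, and define Q̄ ∈ ℝ^{V×V} by q̄_{xy} = (1/|M_{d(x,y)}|) · Σ_{(x',y') ∈ M_{d(x,y)}} q_{x'y'}. Then Q̄ is positive semidefinite and satisfies d(x,y)^2 ≤ q̄_{xx} − 2q̄_{xy} + q̄_{yy} ≤ D^2·d(x,y)^2 for all x,y ∈ V. -/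
open scoped BigOperators

/-- `M i` is the set of ordered pairs of vertices at distance `i`. -/
noncomputable def distPairs {V : Type*} [Fintype V] (G : SimpleGraph V) (i : ℕ) :
    Finset (V × V) :=
  Finset.univ.filter fun p : V × V => G.dist p.1 p.2 = i

/-!
Averaging over the distance classes `M_i` is the trace-orthogonal projection onto the span of the
distance matrices `A_i`. By the three-term recurrence for `A₁ * A_j` (with `c_{j+1} ≠ 0` whenever
`M_{j+1}` is nonempty) this span is the algebra `ℝ[A₁]`. If `E ∈ ℝ[A₁]` is the spectral projection
of `A₁` for an eigenvalue `θ`, then `Q̄ * E = f(θ) • E` for the polynomial `f` with `Q̄ = f(A₁)`, so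
`f(θ) * tr E = tr (Q̄ * E) = tr (Q * E) ≥ 0`; hence `Q̄` is positive semidefinite.

Since `A₁ 𝟙 = k 𝟙` and `A_i ∈ ℝ[A₁]`, all spheres of radius `i` have the same size. Therefore the
diagonal of `Q̄` is constant, equal to the mean of the diagonal of `Q`, and
`q̄ₓₓ - 2 q̄ₓᵧ + q̄ᵧᵧ` is the mean of `q_{x'x'} - 2 q_{x'y'} + q_{y'y'}` over `M_{d(x,y)}`.
-/

open Finset Polynomial
open scoped Matrix MatrixOrder

namespace Matrix

variable {n : Type*} [Fintype n] [DecidableEq n]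

theorem exists_mulVec_eq_smul_of_mem_adjoin {R : Type*} [CommRing R] {A B : Matrix n n R}
    {v : n → R} {μ : R} (hv : A *ᵥ v = μ • v) (hB : B ∈ Algebra.adjoin R {A}) :
    ∃ c : R, B *ᵥ v = c • v := by
  induction hB using Algebra.adjoin_induction with
  | mem B hB => exact ⟨μ, Set.mem_singleton_iff.mp hB ▸ hv⟩
  | algebraMap r => exact ⟨r, by simp [Algebra.algebraMap_eq_smul_one, smul_mulVec]⟩
  | add B C _ _ hB hC =>
    obtain ⟨b, hb⟩ := hB
    obtain ⟨c, hc⟩ := hC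
    exact ⟨b + c, by rw [add_mulVec, hb, hc, add_smul]⟩
  | mul B C _ _ hB hC =>
    obtain ⟨b, hb⟩ := hB
    obtain ⟨c, hc⟩ := hC
    exact ⟨c * b, by rw [← mulVec_mulVec, hc, mulVec_smul, hb, smul_smul]⟩

theorem posSemidef_of_trace_mul_eq_of_mem_adjoin {A B Q : Matrix n n ℝ} (hA : A.IsHermitian)
    (hQ : Q.PosSemidef) (hB : B ∈ Algebra.adjoin ℝ {A})
    (htr : ∀ C ∈ Algebra.adjoin ℝ {A}, (B * C).trace = (Q * C).trace) : B.PosSemidef := by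
  rw [Algebra.adjoin_singleton_eq_range_aeval] at hB htr
  obtain ⟨f, rfl⟩ := (AlgHom.mem_range _).mp hB
  have hA' : IsSelfAdjoint A := hA.isSelfAdjoint
  rw [← nonneg_iff_posSemidef, ← cfc_polynomial f A hA']
  refine cfc_nonneg fun θ hθ => ?_
  have hfin : (spectrum ℝ A).Finite := finite_real_spectrum
  set P : ℝ[X] := Lagrange.basis hfin.toFinset id θ
  have hP : ∀ x ∈ spectrum ℝ A, P.eval x = if x = θ then 1 else 0 := by
    intro x hx
    split_ifs with h
    · subst h
      exact Lagrange.eval_basis_self (Set.injOn_id _) (hfin.mem_toFinset.mpr hx)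
    · exact Lagrange.eval_basis_of_ne (v := id) (Ne.symm h) (hfin.mem_toFinset.mpr hx)
  -- `E` is the orthogonal projection onto the `θ`-eigenspace of `A`.
  obtain ⟨E, hE⟩ : ∃ E, cfc P.eval A = E := ⟨_, rfl⟩
  have hEP : aeval A P = E := by rw [← hE, cfc_polynomial P A hA']
  have hEE : E * E = E := by
    rw [← hE, ← cfc_mul _ _ A]
    exact cfc_congr fun x hx => by simp [hP x hx]
  have hBE : aeval A f * E = f.eval θ • E := by
    rw [← hE, ← cfc_polynomial f A hA', ← cfc_mul _ _ A, ← cfc_const_mul _ _ A]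
    refine cfc_congr fun x hx => ?_
    by_cases h : x = θ <;> simp [hP x hx, h]
  have hEpsd : E.PosSemidef := by
    rw [← nonneg_iff_posSemidef, ← hE]
    exact cfc_nonneg fun x hx => by rw [hP x hx]; split_ifs <;> norm_num
  have hE0 : E ≠ 0 := by
    intro h
    rw [← hE, ← cfc_zero ℝ A] at h
    simpa [hP θ hθ] using (eqOn_of_cfc_eq_cfc h (ha := hA')).eq_of_mem hθ
  have hQE : 0 ≤ (Q * E).trace := by
    have := (hQ.conjTranspose_mul_mul_same E).trace_nonneg
    rwa [hEpsd.isHermitian.eq, trace_mul_cycle, hEE, trace_mul_comm] at this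
  have htrE : 0 < E.trace := hEpsd.trace_nonneg.lt_of_ne' (mt hEpsd.trace_eq_zero_iff.mp hE0)
  rw [← htr E ((AlgHom.mem_range _).mpr ⟨P, hEP⟩), hBE, trace_smul, smul_eq_mul] at hQE
  exact nonneg_of_mul_nonneg_left hQE htrE

end Matrix

namespace SimpleGraph

variable {V : Type*} {G : SimpleGraph V}

lemma exists_adj_dist_eq_of_dist_eq_succ {x y : V} {i : ℕ} (h : G.dist x y = i + 1) :
    ∃ z, G.Adj x z ∧ G.dist z y = i := by
  obtain ⟨p, hp⟩ := exists_walk_of_dist_ne_zero (h.trans_ne i.succ_ne_zero)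
  cases p with
  | nil => simp at h
  | @cons _ z _ hadj q =>
    refine ⟨z, hadj, ?_⟩
    rw [← length_eq_dist_of_subwalk hp (Walk.isSubwalk_cons q hadj)]
    simpa [h] using hp

variable (G) in
noncomputable def distMatrix (i : ℕ) : Matrix V V ℝ :=
  Matrix.of fun x y => if G.dist x y = i then 1 else 0

lemma isHermitian_distMatrix (i : ℕ) : (G.distMatrix i).IsHermitian := by
  ext x y
  simp [distMatrix, dist_comm]

lemma distMatrix_zero [DecidableEq V] (hG : G.Connected) : G.distMatrix 0 = 1 := by
  ext x y
  simp [distMatrix, Matrix.one_apply, hG.dist_eq_zero_iff]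

lemma sum_smul_distMatrix (g : ℕ → ℝ) {s : Finset ℕ}
    (hs : ∀ x y, G.dist x y ∉ s → g (G.dist x y) = 0) :
    ∑ k ∈ s, g k • G.distMatrix k = Matrix.of fun x y => g (G.dist x y) := by
  ext x y
  by_cases h : G.dist x y ∈ s
  · simp [Matrix.sum_apply, distMatrix, h]
  · simp [Matrix.sum_apply, distMatrix, h, hs x y h]

variable [Fintype V]

lemma mem_distPairs {i : ℕ} {p : V × V} : p ∈ distPairs G i ↔ G.dist p.1 p.2 = i := by
  simp [distPairs]

lemma card_adj_dist_eq_zero [DecidableRel G.Adj] {x y : V} {j : ℕ} (h₀ : j ≠ G.dist x y)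
    (h₁ : j ≠ G.dist x y + 1) (h₂ : j ≠ G.dist x y - 1) :
    #{z | G.Adj x z ∧ G.dist z y = j} = 0 := by
  refine card_eq_zero.mpr (filter_eq_empty_iff.mpr fun z _ ⟨hxz, hzy⟩ => ?_)
  have := hxz.diff_dist_adj (u := y)
  rw [dist_comm (u := y), dist_comm (u := y), hzy] at this
  omega

lemma card_adj_dist_pos [DecidableRel G.Adj] {x y : V} {j : ℕ} (h : G.dist x y = j + 1) :
    0 < #{z | G.Adj x z ∧ G.dist z y = j} :=
  let ⟨z, hz⟩ := exists_adj_dist_eq_of_dist_eq_succ h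
  card_pos.mpr ⟨z, by simpa using hz⟩

lemma distMatrix_one_mul_apply [DecidableRel G.Adj] (j : ℕ) (x y : V) :
    (G.distMatrix 1 * G.distMatrix j) x y = #{z | G.Adj x z ∧ G.dist z y = j} := by
  simp only [distMatrix, Matrix.mul_apply, Matrix.of_apply, dist_eq_one_iff_adj, boole_mul,
    ← ite_and]
  simp

lemma distMatrix_mulVec_one_apply (i : ℕ) (x : V) :
    (G.distMatrix i *ᵥ 1) x = #{y | G.dist x y = i} := by
  simp [distMatrix, Matrix.mulVec, dotProduct]

lemma of_dist_mem_span (g : ℕ → ℝ) :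
    Matrix.of (fun x y => g (G.dist x y)) ∈ Submodule.span ℝ (Set.range G.distMatrix) := by
  classical
  rw [← sum_smul_distMatrix g (s := univ.image fun p : V × V => G.dist p.1 p.2)
    fun x y h => absurd (mem_image_of_mem _ (mem_univ (x, y))) h]
  exact Submodule.sum_mem _ fun k _ => Submodule.smul_mem _ _ (Submodule.subset_span ⟨k, rfl⟩)

lemma trace_mul_distMatrix (M : Matrix V V ℝ) (i : ℕ) :
    (M * G.distMatrix i).trace = ∑ p ∈ distPairs G i, M p.1 p.2 := by
  simp [Matrix.trace, Matrix.mul_apply, distMatrix, distPairs, Finset.sum_filter,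
    Fintype.sum_prod_type, dist_comm]

lemma sum_distPairs_fst (i : ℕ) (F : V → ℝ) :
    ∑ p ∈ distPairs G i, F p.1 = ∑ x, #{y | G.dist x y = i} * F x := by
  simp_rw [distPairs, sum_filter, Fintype.sum_prod_type, ← sum_filter, sum_const, nsmul_eq_mul]

lemma expect_distPairs_snd (i : ℕ) (F : V → ℝ) :
    𝔼 p ∈ distPairs G i, F p.2 = 𝔼 p ∈ distPairs G i, F p.1 :=
  expect_equiv (Equiv.prodComm V V) (fun _ => by simp [mem_distPairs, dist_comm]) fun _ _ => rfl

variable (G) in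
noncomputable def distAverage (Q : Matrix V V ℝ) : Matrix V V ℝ :=
  Matrix.of fun x y => 𝔼 p ∈ distPairs G (G.dist x y), Q p.1 p.2

lemma sum_distPairs_distAverage (Q : Matrix V V ℝ) (i : ℕ) :
    ∑ p ∈ distPairs G i, G.distAverage Q p.1 p.2 = ∑ p ∈ distPairs G i, Q p.1 p.2 := by
  rw [sum_congr rfl fun p hp => by rw [distAverage, Matrix.of_apply, mem_distPairs.mp hp],
    sum_const, card_smul_expect]

end SimpleGraph

open SimpleGraph

namespace IsDistanceRegular

variable {V : Type*} [Fintype V] {G : SimpleGraph V}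

theorem exists_card_adj_dist_eq [DecidableRel G.Adj] (hreg : IsDistanceRegular G) (j : ℕ) :
    ∃ g : ℕ → ℕ, ∀ x y, #{z | G.Adj x z ∧ G.dist z y = j} = g (G.dist x y) := by
  choose a b c h using hreg.2
  refine ⟨fun i => if j = i then a i else if j = i + 1 then b i else if j = i - 1 then c i
    else 0, fun x y => ?_⟩
  have hcard (k : ℕ) : Nat.card {z // G.dist x z = 1 ∧ G.dist z y = k} =
      #{z | G.Adj x z ∧ G.dist z y = k} := by
    simp [Nat.card_eq_fintype_card, Fintype.card_subtype, dist_eq_one_iff_adj]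
  obtain ⟨ha, hb, hc⟩ := h _ x y rfl
  dsimp only
  split_ifs with h₀ h₁ h₂
  · rw [← hcard, h₀, ha]
  · rw [← hcard, h₁, hb]
  · rw [← hcard, h₂, hc]
  · exact card_adj_dist_eq_zero h₀ h₁ h₂

theorem distMatrix_mem_adjoin [DecidableEq V] (hreg : IsDistanceRegular G) (i : ℕ) :
    G.distMatrix i ∈ Algebra.adjoin ℝ {G.distMatrix 1} := by
  classical
  induction i using Nat.strong_induction_on with
  | _ i ih =>
  rcases i with _ | j
  · rw [distMatrix_zero hreg.1]
    exact one_mem _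
  obtain ⟨g, hg⟩ := hreg.exists_card_adj_dist_eq j
  have hrec : G.distMatrix 1 * G.distMatrix j =
      ∑ k ∈ range (j + 1), (g k : ℝ) • G.distMatrix k + (g (j + 1) : ℝ) • G.distMatrix (j + 1) := by
    rw [← sum_range_succ, sum_smul_distMatrix (fun k => (g k : ℝ)) fun x y h => ?_]
    · ext x y
      rw [distMatrix_one_mul_apply, hg]
      rfl
    · have := mem_range.not.mp h
      rw [← hg, card_adj_dist_eq_zero (by omega) (by omega) (by omega), Nat.cast_zero]
  by_cases hc : g (j + 1) = 0
  · have hA : G.distMatrix (j + 1) = 0 := by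
      ext x y
      have hxy : G.dist x y ≠ j + 1 := fun h => by
        simpa [hg, h, hc] using card_adj_dist_pos h
      simp [distMatrix, hxy]
    rw [hA]
    exact zero_mem _
  · have hA : G.distMatrix (j + 1) = (g (j + 1) : ℝ)⁻¹ •
        (G.distMatrix 1 * G.distMatrix j - ∑ k ∈ range (j + 1), (g k : ℝ) • G.distMatrix k) := by
      rw [hrec, add_sub_cancel_left, inv_smul_smul₀ (by exact_mod_cast hc)]
    rw [hA]
    refine Subalgebra.smul_mem _ (Subalgebra.sub_mem _ (Subalgebra.mul_mem _
      (Algebra.self_mem_adjoin_singleton ℝ _) (ih j j.lt_succ_self)) ?_) _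
    exact Subalgebra.sum_mem _ fun k hk => Subalgebra.smul_mem _ (ih k (mem_range.mp hk)) _

theorem span_distMatrix_eq_adjoin [DecidableEq V] (hreg : IsDistanceRegular G) :
    Submodule.span ℝ (Set.range G.distMatrix) =
      Subalgebra.toSubmodule (Algebra.adjoin ℝ {G.distMatrix 1}) := by
  classical
  refine le_antisymm (Submodule.span_le.mpr ?_) fun B hB => ?_
  · rintro _ ⟨i, rfl⟩
    exact hreg.distMatrix_mem_adjoin i
  rw [Subalgebra.mem_toSubmodule, Algebra.adjoin_singleton_eq_range_aeval] at hB
  obtain ⟨P, rfl⟩ := (AlgHom.mem_range _).mp hB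
  have h1 : (1 : Matrix V V ℝ) ∈ Submodule.span ℝ (Set.range G.distMatrix) :=
    distMatrix_zero hreg.1 ▸ Submodule.subset_span ⟨0, rfl⟩
  refine mul_one (aeval (G.distMatrix 1) P) ▸
    aeval_apply_smul_mem_of_le_comap' h1 P (G.distMatrix 1) (Submodule.span_le.mpr ?_)
  rintro _ ⟨j, rfl⟩
  obtain ⟨g, hg⟩ := hreg.exists_card_adj_dist_eq j
  rw [SetLike.mem_coe, Submodule.mem_comap, Algebra.lsmul_coe]
  change G.distMatrix 1 * G.distMatrix j ∈ _
  convert of_dist_mem_span (G := G) fun k => (g k : ℝ)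
  ext x y
  simp [distMatrix_one_mul_apply, hg]

theorem exists_card_dist_eq (hreg : IsDistanceRegular G) (i : ℕ) :
    ∃ k : ℝ, ∀ x, (#{y | G.dist x y = i} : ℝ) = k := by
  classical
  obtain ⟨g, hg⟩ := hreg.exists_card_adj_dist_eq 1
  have hdeg : G.distMatrix 1 *ᵥ 1 = (g 0 : ℝ) • 1 := by
    ext x
    have hx := hg x x
    rw [dist_self] at hx
    simp [distMatrix_mulVec_one_apply, ← hx, dist_comm (u := x), dist_eq_one_iff_adj, G.adj_comm]
  obtain ⟨k, hk⟩ := Matrix.exists_mulVec_eq_smul_of_mem_adjoin hdeg (hreg.distMatrix_mem_adjoin i)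
  exact ⟨k, fun x => by simpa [distMatrix_mulVec_one_apply] using congrFun hk x⟩

theorem expect_distPairs_fst (hreg : IsDistanceRegular G) {i : ℕ}
    (hi : (distPairs G i).Nonempty) (F : V → ℝ) :
    𝔼 p ∈ distPairs G i, F p.1 = 𝔼 x, F x := by
  obtain ⟨k, hk⟩ := hreg.exists_card_dist_eq i
  have hsum (F : V → ℝ) : ∑ p ∈ distPairs G i, F p.1 = k * ∑ x, F x := by
    simp [sum_distPairs_fst, hk, mul_sum]
  have hcard : (#(distPairs G i) : ℝ) = k * Fintype.card V := by simpa using hsum 1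
  have hk0 : k ≠ 0 := by
    rintro rfl
    simp [hi.card_pos.ne'] at hcard
  rw [expect_eq_sum_div_card, Fintype.expect_eq_sum_div_card, hsum, hcard,
    mul_div_mul_left _ _ hk0]

theorem posSemidef_distAverage (hreg : IsDistanceRegular G) {Q : Matrix V V ℝ}
    (hQ : Q.PosSemidef) : (G.distAverage Q).PosSemidef := by
  classical
  have hspan := hreg.span_distMatrix_eq_adjoin
  refine Matrix.posSemidef_of_trace_mul_eq_of_mem_adjoin (G.isHermitian_distMatrix 1) hQ ?_
    fun C hC => ?_
  · rw [← Subalgebra.mem_toSubmodule, ← hspan]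
    exact of_dist_mem_span fun i => 𝔼 p ∈ distPairs G i, Q p.1 p.2
  rw [← Subalgebra.mem_toSubmodule, ← hspan] at hC
  induction hC using Submodule.span_induction with
  | mem _ h =>
    obtain ⟨i, rfl⟩ := h
    rw [trace_mul_distMatrix, trace_mul_distMatrix, sum_distPairs_distAverage]
  | zero => simp
  | add _ _ _ _ h₁ h₂ => simp only [Matrix.mul_add, Matrix.trace_add, h₁, h₂]
  | smul a _ _ h => simp only [Matrix.mul_smul, Matrix.trace_smul, h]

theorem distAverage_apply_self (hreg : IsDistanceRegular G) (Q : Matrix V V ℝ) (x : V) :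
    G.distAverage Q x x = 𝔼 z, Q z z := by
  have h0 : (distPairs G 0).Nonempty := ⟨(x, x), mem_distPairs.mpr dist_self⟩
  rw [distAverage, Matrix.of_apply, dist_self, ← hreg.expect_distPairs_fst h0]
  exact expect_congr rfl fun p hp => by rw [hreg.1.dist_eq_zero_iff.mp (mem_distPairs.mp hp)]

theorem distAverage_sub_add (hreg : IsDistanceRegular G) (Q : Matrix V V ℝ) (x y : V) :
    G.distAverage Q x x - 2 * G.distAverage Q x y + G.distAverage Q y y =
      𝔼 p ∈ distPairs G (G.dist x y), (Q p.1 p.1 - 2 * Q p.1 p.2 + Q p.2 p.2) := by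
  have hne : (distPairs G (G.dist x y)).Nonempty := ⟨(x, y), mem_distPairs.mpr rfl⟩
  rw [expect_add_distrib, expect_sub_distrib, ← mul_expect, expect_distPairs_snd _ fun z => Q z z,
    hreg.expect_distPairs_fst hne fun z => Q z z, hreg.distAverage_apply_self,
    hreg.distAverage_apply_self]
  rfl

end IsDistanceRegular

theorem stmt3_general {V : Type*} [Fintype V] (G : SimpleGraph V)
    (hreg : IsDistanceRegular G) (D : ℝ)
    (Q : Matrix V V ℝ) (hQ : Q.PosSemidef)
    (hbound : ∀ x y : V,
      (G.dist x y : ℝ) ^ 2 ≤ Q x x - 2 * Q x y + Q y y ∧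
      Q x x - 2 * Q x y + Q y y ≤ D ^ 2 * (G.dist x y : ℝ) ^ 2)
    (Qbar : Matrix V V ℝ)
    (hQbar : ∀ x y : V, Qbar x y =
      (∑ p ∈ distPairs G (G.dist x y), Q p.1 p.2) / (distPairs G (G.dist x y)).card) :
    Qbar.PosSemidef ∧
      ∀ x y : V,
        (G.dist x y : ℝ) ^ 2 ≤ Qbar x x - 2 * Qbar x y + Qbar y y ∧
        Qbar x x - 2 * Qbar x y + Qbar y y ≤ D ^ 2 * (G.dist x y : ℝ) ^ 2 := by
  obtain rfl : Qbar = G.distAverage Q := Matrix.ext fun x y => by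
    rw [hQbar, distAverage, Matrix.of_apply, expect_eq_sum_div_card]
  refine ⟨hreg.posSemidef_distAverage hQ, fun x y => ?_⟩
  have hne : (distPairs G (G.dist x y)).Nonempty := ⟨(x, y), mem_distPairs.mpr rfl⟩
  rw [hreg.distAverage_sub_add]
  exact ⟨le_expect hne fun p hp => mem_distPairs.mp hp ▸ (hbound p.1 p.2).1,
    expect_le hne fun p hp => mem_distPairs.mp hp ▸ (hbound p.1 p.2).2⟩

theorem stmt3 {V : Type*} [Fintype V] (G : SimpleGraph V)
    (hreg : IsDistanceRegular G) (D : ℝ) (hD : 1 ≤ D)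
    (Q : Matrix V V ℝ) (hQ : Q.PosSemidef)
    (hbound : ∀ x y : V,
      (G.dist x y : ℝ) ^ 2 ≤ Q x x - 2 * Q x y + Q y y ∧
      Q x x - 2 * Q x y + Q y y ≤ D ^ 2 * (G.dist x y : ℝ) ^ 2)
    (Qbar : Matrix V V ℝ)
    (hQbar : ∀ x y : V, Qbar x y =
      (∑ p ∈ distPairs G (G.dist x y), Q p.1 p.2) / (distPairs G (G.dist x y)).card) :
    Qbar.PosSemidef ∧
      ∀ x y : V,
        (G.dist x y : ℝ) ^ 2 ≤ Qbar x x - 2 * Qbar x y + Qbar y y ∧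
        Qbar x x - 2 * Qbar x y + Qbar y y ≤ D ^ 2 * (G.dist x y : ℝ) ^ 2 :=
  stmt3_general G hreg D Q hQ hbound Qbar hQbar
end

section
/- For all integers q ≥ 2 and n ≥ 1, the least distortion of an embedding of the Hamming graph H(q,n) into Euclidean space equals √n, i.e. c_2(H(q,n)) = √n. -/
open scoped BigOperators

/-- The Hamming graph `H(q, n)`: vertices are vectors of length `n` over a
`q`-element alphabet, two being adjacent iff they differ in exactly one coordinate. -/
def hammingGraph (q n : ℕ) : SimpleGraph (Fin n → Fin q) where
  Adj x y := hammingDist x y = 1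
  symm := by
    constructor
    intro x y h
    rwa [hammingDist_comm]
  loopless := by
    constructor
    intro x h
    simp [hammingDist_self] at h

/-!
Upper bound: scale the one-hot code `(Fin n → Fin q) → ℝ^(n × q)` so that
`‖ρ x - ρ y‖ = √(n d(x, y))`; since `0 ≤ d ≤ n` is an integer, `d ≤ √(n d) ≤ √n d`.

Lower bound: restrict to a copy of the cube `{0,1}ⁿ` inside `H(q, n)`. Enflo's inequality
`∑ₓ ‖F x - F xᶜ‖² ≤ ∑ₓ ∑ᵢ ‖F x - F (x with bit i flipped)‖²`, proved by induction on `n` from the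
short diagonals inequality for quadrilaterals in an inner product space, compares the `2ⁿ`
antipodal pairs (each at distance `≥ n`) with the `n 2ⁿ` directed edges (each of length `≤ D`),
giving `2ⁿ n² ≤ 2ⁿ n D²`.
-/

open Finset

section HammingDist

variable {ι : Type*} [Fintype ι] [DecidableEq ι] {β : ι → Type*} [∀ i, DecidableEq (β i)]

lemma hammingDist_update_self {x : ∀ i, β i} {i : ι} {b : β i} (h : x i ≠ b) :
    hammingDist x (Function.update x i b) = 1 := by
  rw [hammingDist, card_eq_one]
  refine ⟨i, ?_⟩
  ext j
  by_cases hj : j = i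
  · subst hj; simp [h]
  · simp [hj]

lemma hammingDist_update_add_one {x y : ∀ i, β i} {i : ι} (h : x i ≠ y i) :
    hammingDist (Function.update x i (y i)) y + 1 = hammingDist x y := by
  have hfilter : ({j | Function.update x i (y i) j ≠ y j} : Finset ι)
      = ({j | x j ≠ y j} : Finset ι).erase i := by
    ext j
    by_cases hj : j = i
    · subst hj; simp
    · simp [hj]
  rw [hammingDist, hammingDist, hfilter, card_erase_add_one (by simpa using h)]

end HammingDist

lemma hammingDist_le_length {q n : ℕ} {x y : Fin n → Fin q} (p : (hammingGraph q n).Walk x y) :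
    hammingDist x y ≤ p.length := by
  induction p with
  | nil => simp
  | @cons u v w huv p ih =>
    calc hammingDist u w ≤ hammingDist u v + hammingDist v w := hammingDist_triangle _ _ _
      _ ≤ p.length + 1 := by rw [show hammingDist u v = 1 from huv]; omega
      _ = (p.cons huv).length := (SimpleGraph.Walk.length_cons _ _).symm

lemma exists_walk_length_eq_hammingDist {q n : ℕ} (x y : Fin n → Fin q) :
    ∃ p : (hammingGraph q n).Walk x y, p.length = hammingDist x y := by
  induction h : hammingDist x y generalizing x with
  | zero => rw [hammingDist_eq_zero] at h; subst h; exact ⟨.nil, rfl⟩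
  | succ k ih =>
    obtain ⟨i, hi⟩ : ∃ i, x i ≠ y i := Function.ne_iff.mp (hammingDist_pos.mp (by omega))
    have hadj : (hammingGraph q n).Adj x (Function.update x i (y i)) := hammingDist_update_self hi
    obtain ⟨p, hp⟩ := ih (Function.update x i (y i))
      (by have := hammingDist_update_add_one hi; omega)
    exact ⟨.cons hadj p, by simp [hp]⟩

lemma hammingGraph_dist (q n : ℕ) (x y : Fin n → Fin q) :
    (hammingGraph q n).dist x y = hammingDist x y := by
  obtain ⟨p, hp⟩ := exists_walk_length_eq_hammingDist x y
  obtain ⟨p', hp'⟩ := SimpleGraph.Reachable.exists_walk_length_eq_dist ⟨p⟩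
  exact le_antisymm (hp ▸ SimpleGraph.dist_le p) (hp' ▸ hammingDist_le_length p')

lemma norm_sub_sq_add_norm_sub_sq_le {E : Type*} [NormedAddCommGroup E] [InnerProductSpace ℝ E]
    (a b c d : E) :
    ‖a - c‖ ^ 2 + ‖b - d‖ ^ 2 ≤ ‖a - b‖ ^ 2 + ‖b - c‖ ^ 2 + ‖c - d‖ ^ 2 + ‖d - a‖ ^ 2 := by
  have key : ∀ u v w : E,
      ‖u + v‖ ^ 2 + ‖v + w‖ ^ 2 + ‖u + w‖ ^ 2 = ‖u‖ ^ 2 + ‖v‖ ^ 2 + ‖w‖ ^ 2 + ‖u + v + w‖ ^ 2 := by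
    intro u v w
    simp only [norm_add_sq_real, inner_add_left]
    ring
  have h := key (a - b) (b - c) (c - d)
  rw [show a - b + (b - c) = a - c by abel, show b - c + (c - d) = b - d by abel,
    show a - c + (c - d) = -(d - a) by abel, norm_neg] at h
  linarith [sq_nonneg ‖a - b + (c - d)‖]

section Cube

variable {n : ℕ}

lemma hammingDist_compl (x : Fin n → Bool) : hammingDist x xᶜ = n := by
  simp [hammingDist]

lemma Fin.cons_compl (b : Bool) (ε : Fin n → Bool) :
    (Fin.cons b ε : Fin (n + 1) → Bool)ᶜ = Fin.cons (!b) εᶜ := by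
  ext i
  cases i using Fin.cases <;> rfl

lemma sum_cube_succ {M : Type*} [AddCommMonoid M] (h : (Fin (n + 1) → Bool) → M) :
    ∑ x, h x = ∑ ε, (h (Fin.cons false ε) + h (Fin.cons true ε)) := by
  rw [← (Fin.consEquiv fun _ => Bool).sum_comp, Fintype.sum_prod_type, Fintype.sum_bool,
    add_comm, ← sum_add_distrib]
  rfl

lemma sum_apply_compl {α M : Type*} [Fintype α] [BooleanAlgebra α] [AddCommMonoid M] (h : α → M) :
    ∑ a, h aᶜ = ∑ a, h a :=
  Equiv.sum_comp (compl_involutive.toPerm _) h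

lemma sum_update_not_cons {M : Type*} [AddCommMonoid M]
    (φ : (Fin (n + 1) → Bool) → (Fin (n + 1) → Bool) → M) (b : Bool) (ε : Fin n → Bool) :
    ∑ i, φ (Fin.cons b ε)
        (Function.update (Fin.cons b ε) i (!(Fin.cons b ε : Fin (n + 1) → Bool) i))
      = φ (Fin.cons b ε) (Fin.cons (!b) ε)
        + ∑ j, φ (Fin.cons b ε) (Fin.cons b (Function.update ε j (!ε j))) := by
  simp only [Fin.sum_univ_succ, Fin.cons_zero, Fin.cons_succ, Fin.update_cons_zero, Fin.cons_update]

variable {E : Type*} [NormedAddCommGroup E] [InnerProductSpace ℝ E]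

theorem sum_norm_sub_compl_sq_le (F : (Fin n → Bool) → E) :
    ∑ x, ‖F x - F xᶜ‖ ^ 2 ≤ ∑ x, ∑ i, ‖F x - F (Function.update x i (!x i))‖ ^ 2 := by
  induction n with
  | zero =>
    refine sum_le_sum fun x _ => ?_
    simp [Subsingleton.elim xᶜ x]
  | succ n ih =>
    set g : Bool → (Fin n → Bool) → E := fun b ε => F (Fin.cons b ε)
    have hfour : ∀ ε, ‖g false ε - g true εᶜ‖ ^ 2 + ‖g false εᶜ - g true ε‖ ^ 2 ≤
        ‖g false ε - g false εᶜ‖ ^ 2 + ‖g false εᶜ - g true εᶜ‖ ^ 2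
          + ‖g true ε - g true εᶜ‖ ^ 2 + ‖g false ε - g true ε‖ ^ 2 := fun ε => by
      have h := norm_sub_sq_add_norm_sub_sq_le (g false ε) (g false εᶜ) (g true εᶜ) (g true ε)
      rwa [norm_sub_rev (g true εᶜ), norm_sub_rev (g true ε) (g false ε)] at h
    have hdiag : ∑ x, ‖F x - F xᶜ‖ ^ 2
        = ∑ ε, (‖g false ε - g true εᶜ‖ ^ 2 + ‖g false εᶜ - g true ε‖ ^ 2) := by
      simp only [sum_cube_succ, Fin.cons_compl, Bool.not_false, Bool.not_true, g,
        norm_sub_rev (F (Fin.cons true _))]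
    have hedge : ∑ x, ∑ i, ‖F x - F (Function.update x i (!x i))‖ ^ 2
        = ∑ ε, (∑ j, ‖g false ε - g false (Function.update ε j (!ε j))‖ ^ 2
          + ∑ j, ‖g true ε - g true (Function.update ε j (!ε j))‖ ^ 2
          + 2 * ‖g false ε - g true ε‖ ^ 2) := by
      simp only [sum_cube_succ, sum_update_not_cons fun x y => ‖F x - F y‖ ^ 2,
        Bool.not_false, Bool.not_true]
      refine sum_congr rfl fun ε _ => ?_
      rw [norm_sub_rev (F (Fin.cons true ε : Fin (n + 1) → Bool))]
      ring
    have hswap := sum_apply_compl fun ε => ‖g false ε - g true ε‖ ^ 2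
    have hsum := sum_le_sum fun ε (_ : ε ∈ univ) => hfour ε
    rw [hdiag, hedge]
    simp only [sum_add_distrib, ← mul_sum] at hsum ⊢
    linarith [ih (g false), ih (g true)]

end Cube

theorem sqrt_le_of_cube_embedding {E : Type*} [NormedAddCommGroup E] [InnerProductSpace ℝ E]
    {n : ℕ} (hn : 1 ≤ n) {D : ℝ} (F : (Fin n → Bool) → E) (hdiag : ∀ x, (n : ℝ) ≤ ‖F x - F xᶜ‖)
    (hedge : ∀ x i, ‖F x - F (Function.update x i (!x i))‖ ≤ D) : √n ≤ D := by
  have hD : 0 ≤ D := (norm_nonneg _).trans (hedge 0 ⟨0, hn⟩)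
  rw [Real.sqrt_le_left hD]
  have key : ∑ _x : Fin n → Bool, (n : ℝ) ^ 2 ≤ ∑ _x : Fin n → Bool, ∑ _i : Fin n, D ^ 2 :=
    calc ∑ _x : Fin n → Bool, (n : ℝ) ^ 2
        ≤ ∑ x, ‖F x - F xᶜ‖ ^ 2 := sum_le_sum fun x _ => by gcongr; exact hdiag x
      _ ≤ ∑ x, ∑ i, ‖F x - F (Function.update x i (!x i))‖ ^ 2 := sum_norm_sub_compl_sq_le F
      _ ≤ ∑ _x : Fin n → Bool, ∑ _i : Fin n, D ^ 2 :=
        sum_le_sum fun x _ => sum_le_sum fun i _ => by gcongr; exact hedge x i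
  simp only [sum_const, card_univ, Fintype.card_pi, Fintype.card_bool, prod_const,
    Fintype.card_fin, nsmul_eq_mul] at key
  push_cast at key
  have hn' : (0 : ℝ) < n := by exact_mod_cast hn
  nlinarith [le_of_mul_le_mul_left key (by positivity)]

def oneHot {ι β : Type*} [DecidableEq β] (x : ι → β) : EuclideanSpace ℝ (ι × β) :=
  WithLp.toLp 2 fun p => if x p.1 = p.2 then 1 else 0

lemma norm_oneHot_sub_sq {ι β : Type*} [Fintype ι] [Fintype β] [DecidableEq β] (x y : ι → β) :
    ‖oneHot x - oneHot y‖ ^ 2 = 2 * hammingDist x y := by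
  have hcoord : ∀ i, ∑ b, ((if x i = b then 1 else 0) - (if y i = b then 1 else 0) : ℝ) ^ 2
      = 2 * if x i ≠ y i then 1 else 0 := fun i => by
    by_cases h : x i = y i
    · simp [h]
    · simp [sub_sq, ite_pow, sum_add_distrib, sum_sub_distrib, h, one_add_one_eq_two]
  rw [EuclideanSpace.real_norm_sq_eq, Fintype.sum_prod_type]
  simp only [oneHot, PiLp.sub_apply, hcoord, ← mul_sum, sum_boole, hammingDist]

lemma natCast_le_sqrt_mul_and_sqrt_mul_le {d n : ℕ} (h : d ≤ n) :
    (d : ℝ) ≤ √(n * d) ∧ √(n * d) ≤ √n * d := by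
  constructor
  · rw [Real.le_sqrt (by positivity) (by positivity), sq]
    gcongr
  · rw [Real.sqrt_mul (by positivity)]
    gcongr
    rcases d.eq_zero_or_pos with hd | hd
    · simp [hd]
    · exact Real.sqrt_le_self_iff.mpr (Or.inr (by exact_mod_cast hd))

lemma exists_hamming_embedding_norm_sub_eq (q n : ℕ) :
    ∃ (m : ℕ) (ρ : (Fin n → Fin q) → EuclideanSpace ℝ (Fin m)),
      ∀ x y, ‖ρ x - ρ y‖ = √(n * hammingDist x y) := by
  let e := LinearIsometryEquiv.piLpCongrLeft 2 ℝ ℝ (finProdFinEquiv (m := n) (n := q))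
  refine ⟨n * q, fun x => e (√(n / 2) • oneHot x), fun x y => ?_⟩
  rw [← map_sub, LinearIsometryEquiv.norm_map, ← smul_sub, norm_smul,
    ← Real.sqrt_sq (norm_nonneg (oneHot x - oneHot y)), norm_oneHot_sub_sq, Real.norm_eq_abs,
    abs_of_nonneg (Real.sqrt_nonneg _), ← Real.sqrt_mul (by positivity)]
  congr 1
  ring

theorem stmt6 (q n : ℕ) (hq : 2 ≤ q) (hn : 1 ≤ n) :
    leastDistortion (hammingGraph q n) = Real.sqrt n := by
  simp only [leastDistortion, hammingGraph_dist]
  refine IsLeast.csInf_eq ⟨?_, ?_⟩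
  · obtain ⟨m, ρ, hρ⟩ := exists_hamming_embedding_norm_sub_eq q n
    refine ⟨m, ρ, fun x y => ?_⟩
    rw [hρ]
    exact natCast_le_sqrt_mul_and_sqrt_mul_le
      (hammingDist_le_card_fintype.trans_eq (Fintype.card_fin n))
  · rintro D ⟨m, ρ, hρ⟩
    let ι : Bool → Fin q := fun b => (finTwoEquiv.symm b).castLE hq
    have hι : Function.Injective ι := (Fin.castLE_injective hq).comp finTwoEquiv.symm.injective
    have hdist : ∀ x y : Fin n → Bool, hammingDist (ι ∘ x) (ι ∘ y) = hammingDist x y :=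
      fun x y => hammingDist_comp (fun _ => ι) fun _ => hι
    refine sqrt_le_of_cube_embedding hn (fun x => ρ (ι ∘ x)) (fun x => ?_) (fun x i => ?_)
    · simpa [hdist, hammingDist_compl] using (hρ (ι ∘ x) (ι ∘ xᶜ)).1
    · simpa [hdist, hammingDist_update_self] using (hρ (ι ∘ x) (ι ∘ Function.update x i (!x i))).2
end

section
/- For all integers q ≥ 2, n ≥ 1 and j with 1 ≤ j ≤ n, one has (q−1)^n − (−1)^j·(q−1)^{n−j} ≤ q·j·(q−1)^{n−1}, with equality for j = 1. Equivalently, among the quantities (q·j)/((q−1)^n − (−1)^j·(q−1)^{n−j}) for those j where the denominator is nonzero, the minimum value is 1/(q−1)^{n−1}, attained at j = 1. -/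
/-- For the Hamming graph `H(q,n)`:
`(q−1)^n − (−1)^j (q−1)^{n−j} ≤ q·j·(q−1)^{n−1}` for `1 ≤ j ≤ n`, with equality
for `j = 1`.  Hence `α = min_j (k₁−θ_j)/(kₙ−vₙ(θ_j)) = 1/(q−1)^{n−1}`. -/
theorem stmt8 (q n j : ℕ) (hq : 2 ≤ q) (hn : 1 ≤ n) (hj1 : 1 ≤ j) (hjn : j ≤ n) :
    ((q : ℝ) - 1) ^ n - (-1 : ℝ) ^ j * ((q : ℝ) - 1) ^ (n - j) ≤
      (q : ℝ) * (j : ℝ) * ((q : ℝ) - 1) ^ (n - 1) ∧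
    ((q : ℝ) - 1) ^ n - (-1 : ℝ) ^ 1 * ((q : ℝ) - 1) ^ (n - 1) =
      (q : ℝ) * (1 : ℝ) * ((q : ℝ) - 1) ^ (n - 1) := by
  set t : ℝ := (q : ℝ) - 1 with htdef
  have ht : (1 : ℝ) ≤ t := by
    have : (2 : ℝ) ≤ (q : ℝ) := by exact_mod_cast hq
    linarith
  have ht0 : (0 : ℝ) ≤ t := by linarith
  have hqt : (q : ℝ) = t + 1 := by ring
  have hpow : t ^ n = t * t ^ (n - 1) := by
    conv_lhs => rw [show n = (n - 1) + 1 by omega]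
    ring
  have hjr : (1 : ℝ) ≤ (j : ℝ) := by exact_mod_cast hj1
  have hpos : (0 : ℝ) ≤ t ^ (n - 1) := pow_nonneg ht0 _
  constructor
  · have h1 : t ^ (n - j) ≤ t ^ (n - 1) := pow_le_pow_right₀ ht (by omega)
    have h2 : -((-1 : ℝ) ^ j * t ^ (n - j)) ≤ t ^ (n - 1) := by
      rcases Int.even_or_odd j with _ | _
      · rcases Nat.even_or_odd j with he | ho
        · rw [he.neg_one_pow]
          have := pow_nonneg ht0 (n - j)
          linarith
        · rw [ho.neg_one_pow]
          simpa using h1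
      · rcases Nat.even_or_odd j with he | ho
        · rw [he.neg_one_pow]
          have := pow_nonneg ht0 (n - j)
          linarith
        · rw [ho.neg_one_pow]
          simpa using h1
    have h3 : t ^ n - (-1 : ℝ) ^ j * t ^ (n - j) ≤ (t + 1) * t ^ (n - 1) := by
      rw [hpow]; linarith
    have h4 : (t + 1) * t ^ (n - 1) ≤ (t + 1) * (j : ℝ) * t ^ (n - 1) := by
      nlinarith [mul_nonneg (mul_nonneg (show (0:ℝ) ≤ t+1 by linarith) (show (0:ℝ) ≤ (j:ℝ)-1 by linarith)) hpos]
    rw [hqt]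
    linarith
  · rw [hqt, hpow]; ring
end

section
/- For all integers n ≥ 1, v ≥ 2n and j with 1 ≤ j ≤ n, one has v·(C(v−n, n) − (−1)^j·C(v−n−j, n−j)) ≤ ((v+1)·j − j^2)·(C(v−n, n) + C(v−n−1, n−1)), with equality for j = 1; here C(a,b) denotes the binomial coefficient. Equivalently, the minimum over j ∈ {1,…,n} of ((v+1)j − j^2)/(C(v−n,n) − (−1)^j C(v−n−j, n−j)) (over those j with nonzero denominator) is v/(C(v−n,n) + C(v−n−1,n−1)), attained at j = 1. -/
lemma aux_choose (a n : ℕ) : ∀ j, 1 ≤ j → j ≤ n → n ≤ a →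
    Nat.choose (a - j) (n - j) ≤ Nat.choose (a - 1) (n - 1) := by
  intro j
  induction j with
  | zero => intro h; omega
  | succ k ih =>
    intro _ hkn hna
    rcases Nat.eq_zero_or_pos k with hk | hk
    · subst hk; simp
    · have h1 : Nat.choose (a - (k+1)) (n - (k+1)) ≤ Nat.choose (a - k) (n - k) := by
        have ha : a - k = (a - (k+1)) + 1 := by omega
        have hn' : n - k = (n - (k+1)) + 1 := by omega
        rw [ha, hn', Nat.choose_succ_succ]
        exact Nat.le_add_right _ _
      exact h1.trans (ih hk (by omega) hna)

/-- For the Johnson graph `J(v,n)`: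
`v·(C(v−n,n) − (−1)^j C(v−n−j,n−j)) ≤ ((v+1)j − j²)·(C(v−n,n) + C(v−n−1,n−1))`
for `1 ≤ j ≤ n`, with equality for `j = 1`.  Hence
`α = min_j (k₁−θ_j)/(kₙ−vₙ(θ_j)) = v/(C(v−n,n) + C(v−n−1,n−1))`. -/
theorem stmt11 (n v j : ℕ) (hn : 1 ≤ n) (hv : 2 * n ≤ v) (hj1 : 1 ≤ j) (hjn : j ≤ n) :
    (v : ℝ) * ((Nat.choose (v - n) n : ℝ) -
        (-1 : ℝ) ^ j * (Nat.choose (v - n - j) (n - j) : ℝ)) ≤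
      (((v : ℝ) + 1) * (j : ℝ) - (j : ℝ) ^ 2) *
        ((Nat.choose (v - n) n : ℝ) + (Nat.choose (v - n - 1) (n - 1) : ℝ)) ∧
    (v : ℝ) * ((Nat.choose (v - n) n : ℝ) -
        (-1 : ℝ) ^ 1 * (Nat.choose (v - n - 1) (n - 1) : ℝ)) =
      (((v : ℝ) + 1) * (1 : ℝ) - (1 : ℝ) ^ 2) *
        ((Nat.choose (v - n) n : ℝ) + (Nat.choose (v - n - 1) (n - 1) : ℝ)) := by
  constructor
  · set A : ℝ := (Nat.choose (v - n) n : ℝ) with hA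
    set B1 : ℝ := (Nat.choose (v - n - 1) (n - 1) : ℝ) with hB1
    set Bj : ℝ := (Nat.choose (v - n - j) (n - j) : ℝ) with hBj
    have hBjB1 : Bj ≤ B1 := by
      have h := aux_choose (v - n) n j hj1 hjn (by omega)
      rw [hBj, hB1]; exact_mod_cast h
    have hBjpos : (0:ℝ) ≤ Bj := Nat.cast_nonneg _
    have hB1pos : (0:ℝ) ≤ B1 := Nat.cast_nonneg _
    have hApos : (0:ℝ) ≤ A := Nat.cast_nonneg _
    have h1 : A - (-1:ℝ)^j * Bj ≤ A + B1 := by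
      have : -Bj ≤ (-1:ℝ)^j * Bj := by
        rcases neg_one_pow_eq_or ℝ j with h | h <;> rw [h] <;> linarith
      nlinarith
    have h2 : (v:ℝ) ≤ ((v:ℝ)+1) * j - (j:ℝ)^2 := by
      have hjv : (j:ℝ) ≤ (v:ℝ) := by exact_mod_cast (hjn.trans (by omega))
      have hj1' : (1:ℝ) ≤ (j:ℝ) := by exact_mod_cast hj1
      nlinarith
    have hvpos : (0:ℝ) ≤ (v:ℝ) := Nat.cast_nonneg _
    nlinarith
  · ring
end

section
/- Let G be a connected strongly regular graph of diameter 2 with parameters (ν, k, λ, μ), and let r = (1/2)·((λ − μ) + √((λ − μ)^2 + 4(k − μ))) be the larger eigenvalue of its adjacency matrix distinct from k. Then the least distortion of an embedding of G into Euclidean space satisfies c_2(G)^2 = 4·(ν − k − 1)·(k − r) / (k·(ν − k + r)). -/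
open Matrix

namespace Matrix

variable {n : Type*}

theorem norm_sub_sq_eq_gram {E : Type*} [NormedAddCommGroup E] [InnerProductSpace ℝ E]
    (f : n → E) (i j : n) :
    ‖f i - f j‖ ^ 2 = gram ℝ f i i + gram ℝ f j j - 2 * gram ℝ f i j := by
  rw [norm_sub_sq_real, gram_apply, gram_apply, gram_apply, real_inner_self_eq_norm_sq,
    real_inner_self_eq_norm_sq]
  ring

/-- If `A² = (r + s) A - r s I + μ J`, this matrix equals `(A - s I)(k I - A)`; for the adjacency
matrix of a strongly regular graph it is `(k - r)(r - s)` times the spectral projection onto the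
`r`-eigenspace. -/
def scaledEigenprojection [DecidableEq n] {R : Type*} [Ring R] (A J : Matrix n n R)
    (k μ r s : R) : Matrix n n R :=
  (k - r) • (A - s • 1) - μ • J

variable [Fintype n]

theorem PosSemidef.of_mul_self_eq_smul {Q : Matrix n n ℝ} (hQ : Q.IsHermitian) {c : ℝ}
    (hc : 0 < c) (hQQ : Q * Q = c • Q) : Q.PosSemidef := by
  have : Q = c⁻¹ • (Qᴴ * Q) := by rw [hQ.eq, hQQ, smul_smul, inv_mul_cancel₀ hc.ne', one_smul]
  rw [this]
  exact (posSemidef_conjTranspose_mul_self Q).smul (inv_nonneg.2 hc.le)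

theorem PosSemidef.exists_eq_gram {M : Matrix n n ℝ} (hM : M.PosSemidef) :
    ∃ (m : ℕ) (ρ : n → EuclideanSpace ℝ (Fin m)), M = gram ℝ ρ := by
  obtain ⟨m, v, rfl⟩ := posSemidef_iff_eq_sum_vecMulVec.mp hM
  refine ⟨m, fun i ↦ WithLp.toLp 2 fun k ↦ v k i, ?_⟩
  ext i j
  simp [gram_apply, PiLp.inner_apply, vecMulVec_apply, Matrix.sum_apply, mul_comm]

theorem PosSemidef.sum_mul_nonneg {Q M : Matrix n n ℝ} (hQ : Q.PosSemidef) (hM : M.PosSemidef) :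
    0 ≤ ∑ i, ∑ j, Q i j * M i j := by
  obtain ⟨m, v, rfl⟩ := posSemidef_iff_eq_sum_vecMulVec.mp hQ
  calc (0 : ℝ) ≤ ∑ k, v k ⬝ᵥ M *ᵥ v k :=
        Finset.sum_nonneg fun k _ ↦ by simpa using hM.dotProduct_mulVec_nonneg (v k)
    _ = _ := by
      simp only [dotProduct, mulVec, Matrix.sum_apply, vecMulVec_apply, star_trivial,
        Finset.mul_sum, Finset.sum_mul]
      rw [Finset.sum_comm]
      refine Finset.sum_congr rfl fun i _ ↦ ?_
      rw [Finset.sum_comm]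
      exact Finset.sum_congr rfl fun j _ ↦ Finset.sum_congr rfl fun k _ ↦ by ring

theorem PosSemidef.sum_mul_norm_sub_sq_nonpos_s13 {E : Type*} [NormedAddCommGroup E]
    [InnerProductSpace ℝ E] {Q : Matrix n n ℝ} (hQ : Q.PosSemidef) (hrow : ∀ i, ∑ j, Q i j = 0)
    (f : n → E) : ∑ i, ∑ j, Q i j * ‖f i - f j‖ ^ 2 ≤ 0 := by
  have hcol (j : n) : ∑ i, Q i j = 0 := by
    simpa [← hQ.isHermitian.apply j] using hrow j
  have hexpand (i j : n) : Q i j * ‖f i - f j‖ ^ 2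
      = Q i j * gram ℝ f i i + Q i j * gram ℝ f j j - 2 * (Q i j * gram ℝ f i j) := by
    rw [norm_sub_sq_eq_gram]; ring
  have hleft : ∑ i, ∑ j, Q i j * gram ℝ f i i = 0 := by
    simp [← Finset.sum_mul, hrow]
  have hright : ∑ i, ∑ j, Q i j * gram ℝ f j j = 0 := by
    rw [Finset.sum_comm]; simp [← Finset.sum_mul, hcol]
  have := hQ.sum_mul_nonneg (posSemidef_gram ℝ f)
  simp only [hexpand, Finset.sum_sub_distrib, Finset.sum_add_distrib, hleft, hright,
    ← Finset.mul_sum]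
  linarith

theorem scaledEigenprojection_mul_self [DecidableEq n] {R : Type*} [CommRing R]
    {A J : Matrix n n R} {k μ ν r s : R}
    (hA : A * A = (-(r * s)) • 1 + (r + s) • A + μ • J) (hAJ : A * J = k • J)
    (hJA : J * A = k • J) (hJJ : J * J = ν • J) (hκ : μ * ν = (k - r) * (k - s)) :
    scaledEigenprojection A J k μ r s * scaledEigenprojection A J k μ r s
      = ((k - r) * (r - s)) • scaledEigenprojection A J k μ r s := by
  simp only [scaledEigenprojection, sub_mul, mul_sub, smul_mul_assoc, mul_smul_comm, smul_smul,
    one_mul, mul_one, hA, hAJ, hJA, hJJ, smul_add, smul_sub]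
  match_scalars <;> first | ring1 | linear_combination μ * hκ

end Matrix

theorem srg_eigenvalue_bounds {k l μ ν r s : ℝ} (hμ : 0 < μ) (hμk : μ ≤ k) (hkν : k < ν)
    (hparam : k ^ 2 = (k - μ) + (l - μ) * k + μ * ν)
    (hr : r = ((l - μ) + √((l - μ) ^ 2 + 4 * (k - μ))) / 2) (hs : s = l - μ - r) :
    r * s = μ - k ∧ μ * ν = (k - r) * (k - s) ∧ s < 0 ∧ 0 ≤ r ∧ r < k := by
  have hw := Real.sq_sqrt (by nlinarith : 0 ≤ (l - μ) ^ 2 + 4 * (k - μ))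
  have hw0 := Real.sqrt_nonneg ((l - μ) ^ 2 + 4 * (k - μ))
  have hprod : r * s = μ - k := by
    rw [hs, hr]; linear_combination (-1 / 4 : ℝ) * hw
  have hsr : s ≤ r := by rw [hs, hr]; linarith
  have hκ : μ * ν = (k - r) * (k - s) := by
    linear_combination k * hs - hparam - hprod
  have hlk : l < k := by nlinarith
  have hs0 : s < 0 := by
    -- otherwise `r ≥ s ≥ 0`, so `μ - k = r s ≥ 0` and `l - μ = r + s ≥ 0` contradict `l < k`
    by_contra! h
    nlinarith
  have hr0 : 0 ≤ r := by nlinarith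
  exact ⟨hprod, hκ, hs0, hr0, by nlinarith⟩

namespace SimpleGraph

variable {V : Type*} {G : SimpleGraph V}

def EmbedsWithDistortion (G : SimpleGraph V) (D : ℝ) : Prop :=
  ∃ (m : ℕ) (ρ : V → EuclideanSpace ℝ (Fin m)),
    ∀ x y : V, (G.dist x y : ℝ) ≤ ‖ρ x - ρ y‖ ∧ ‖ρ x - ρ y‖ ≤ D * (G.dist x y : ℝ)

theorem leastDistortion_eq_of_isLeast [Fintype V] {D : ℝ}
    (h : IsLeast {D | G.EmbedsWithDistortion D} D) : leastDistortion G = D :=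
  h.csInf_eq

theorem EmbedsWithDistortion.one_le {D : ℝ} (hD : G.EmbedsWithDistortion D) {x y : V}
    (hxy : G.Adj x y) : 1 ≤ D := by
  obtain ⟨m, ρ, hρ⟩ := hD
  simpa [dist_eq_one_iff_adj.mpr hxy] using (hρ x y).1.trans (hρ x y).2

theorem Reachable.dist_eq_two {x y : V} (hxy : G.Reachable x y) (hle : G.dist x y ≤ 2)
    (hne : x ≠ y) (hnadj : ¬G.Adj x y) : G.dist x y = 2 := by
  have h0 : G.dist x y ≠ 0 := dist_ne_zero_iff_ne_and_reachable.mpr ⟨hne, hxy⟩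
  have h1 : G.dist x y ≠ 1 := mt dist_eq_one_iff_adj.mp hnadj
  omega

theorem Reachable.exists_adj_adj_of_dist_eq_two {x y : V} (hxy : G.Reachable x y)
    (h : G.dist x y = 2) : x ≠ y ∧ ¬G.Adj x y ∧ ∃ z, G.Adj x z ∧ G.Adj y z := by
  have h2 : G.edist x y = 2 := by rw [← hxy.coe_dist_eq_edist, h]; rfl
  obtain ⟨hne, hnadj, z, hz⟩ := edist_eq_two_iff.mp h2
  exact ⟨hne, hnadj, z, G.mem_commonNeighbors.mp hz⟩

theorem embedsWithDistortion_of_norm_sub_eq (hconn : G.Connected)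
    (hdiam : ∀ x y, G.dist x y ≤ 2) {x y z : V} (hne : x ≠ y) (hnadj : ¬G.Adj x y)
    (hxz : G.Adj x z) (hyz : G.Adj y z) {m : ℕ} {a : ℝ} (ρ : V → EuclideanSpace ℝ (Fin m))
    (hρadj : ∀ u v, G.Adj u v → ‖ρ u - ρ v‖ = a)
    (hρnadj : ∀ u v, u ≠ v → ¬G.Adj u v → ‖ρ u - ρ v‖ = 2) :
    G.EmbedsWithDistortion a := by
  have ha : 1 ≤ a := by
    have := norm_sub_le_norm_sub_add_norm_sub (ρ x) (ρ z) (ρ y)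
    rw [hρnadj x y hne hnadj, hρadj x z hxz, hρadj z y hyz.symm] at this
    linarith
  refine ⟨m, ρ, fun u v ↦ ?_⟩
  by_cases huv : u = v
  · simp [huv]
  by_cases hadj : G.Adj u v
  · rw [dist_eq_one_iff_adj.mpr hadj, hρadj u v hadj, Nat.cast_one, mul_one]
    exact ⟨ha, le_rfl⟩
  · rw [(hconn u v).dist_eq_two (hdiam u v) huv hadj, hρnadj u v huv hadj, Nat.cast_ofNat]
    exact ⟨le_rfl, by linarith⟩

theorem EmbedsWithDistortion.sum_posPart_mul_dist_sq_le [Fintype V] {D : ℝ}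
    (hD : G.EmbedsWithDistortion D) {Q : Matrix V V ℝ} (hQ : Q.PosSemidef)
    (hrow : ∀ x, ∑ y, Q x y = 0) :
    ∑ x, ∑ y, (Q x y)⁺ * (G.dist x y : ℝ) ^ 2
      ≤ D ^ 2 * ∑ x, ∑ y, (Q x y)⁻ * (G.dist x y : ℝ) ^ 2 := by
  obtain ⟨m, ρ, hρ⟩ := hD
  have hlap := hQ.sum_mul_norm_sub_sq_nonpos_s13 hrow ρ
  have hsplit (x y : V) : Q x y * ‖ρ x - ρ y‖ ^ 2
      = (Q x y)⁺ * ‖ρ x - ρ y‖ ^ 2 - (Q x y)⁻ * ‖ρ x - ρ y‖ ^ 2 := by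
    rw [← sub_mul, posPart_sub_negPart]
  simp only [hsplit, Finset.sum_sub_distrib] at hlap
  calc ∑ x, ∑ y, (Q x y)⁺ * (G.dist x y : ℝ) ^ 2
      ≤ ∑ x, ∑ y, (Q x y)⁺ * ‖ρ x - ρ y‖ ^ 2 := by
        gcongr with x _ y _
        exact (hρ x y).1
    _ ≤ ∑ x, ∑ y, (Q x y)⁻ * ‖ρ x - ρ y‖ ^ 2 := by linarith
    _ ≤ ∑ x, ∑ y, (Q x y)⁻ * (D * G.dist x y) ^ 2 := by
        gcongr with x _ y _
        exact (hρ x y).2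
    _ = D ^ 2 * ∑ x, ∑ y, (Q x y)⁻ * (G.dist x y : ℝ) ^ 2 := by
        simp only [Finset.mul_sum, mul_pow]
        exact Finset.sum_congr rfl fun _ _ ↦ Finset.sum_congr rfl fun _ _ ↦ by ring

theorem isHermitian_scaledEigenprojection [DecidableEq V] [DecidableRel G.Adj] (k μ r s : ℝ) :
    (scaledEigenprojection (G.adjMatrix ℝ) (of 1) k μ r s).IsHermitian := by
  ext x y
  simp [scaledEigenprojection, adjMatrix_apply, one_apply, adj_comm, eq_comm]

theorem scaledEigenprojection_adjMatrix_apply_of_ne [DecidableEq V] [DecidableRel G.Adj]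
    {k μ r s : ℝ} {x y : V} (hxy : x ≠ y) :
    scaledEigenprojection (G.adjMatrix ℝ) (of 1) k μ r s x y = (k - r) * G.adjMatrix ℝ x y - μ := by
  simp [scaledEigenprojection, hxy]

theorem scaledEigenprojection_adjMatrix_apply_self [DecidableEq V] [DecidableRel G.Adj]
    {k μ r s : ℝ} (x : V) :
    scaledEigenprojection (G.adjMatrix ℝ) (of 1) k μ r s x x = -((k - r) * s) - μ := by
  simp [scaledEigenprojection]

theorem Connected.posPart_negPart_mul_dist_sq [DecidableEq V] [DecidableRel G.Adj]
    (hconn : G.Connected) (hdiam : ∀ x y, G.dist x y ≤ 2) {Q : Matrix V V ℝ} {b c : ℝ}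
    (hb : 0 ≤ b) (hbc : b ≤ c) (hQ : ∀ x y, x ≠ y → Q x y = b - c * G.adjMatrix ℝ x y)
    (x y : V) :
    (Q x y)⁺ * (G.dist x y : ℝ) ^ 2 = 4 * b * (1 - (1 : Matrix V V ℝ) x y - G.adjMatrix ℝ x y) ∧
      (Q x y)⁻ * (G.dist x y : ℝ) ^ 2 = (c - b) * G.adjMatrix ℝ x y := by
  by_cases hxy : x = y
  · subst hxy; simp
  have hQxy := hQ x y hxy
  rw [one_apply_ne hxy]
  by_cases hadj : G.Adj x y
  · rw [adjMatrix_apply, if_pos hadj] at hQxy ⊢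
    have hneg : Q x y ≤ 0 := by linarith
    rw [posPart_of_nonpos hneg, negPart_of_nonpos hneg, hQxy, dist_eq_one_iff_adj.mpr hadj]
    constructor <;> push_cast <;> ring
  · rw [adjMatrix_apply, if_neg hadj] at hQxy ⊢
    have hnonneg : 0 ≤ Q x y := by linarith
    rw [posPart_of_nonneg hnonneg, negPart_of_nonneg hnonneg, hQxy,
      (hconn x y).dist_eq_two (hdiam x y) hxy hadj]
    constructor <;> push_cast <;> ring

variable [Fintype V] [DecidableRel G.Adj]

theorem IsRegularOfDegree.sum_adjMatrix_apply {α : Type*} [NonAssocSemiring α] {d : ℕ}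
    (h : G.IsRegularOfDegree d) (x : V) : ∑ y, G.adjMatrix α x y = d := by
  simpa [mulVec, dotProduct] using
    adjMatrix_mulVec_const_apply_of_regular h (a := (1 : α)) (v := x)

theorem IsRegularOfDegree.adjMatrix_mul_of_one {α : Type*} [NonAssocSemiring α] {d : ℕ}
    (h : G.IsRegularOfDegree d) : G.adjMatrix α * of 1 = (d : α) • of 1 := by
  ext x y
  rw [mul_apply]
  simp only [of_apply, Pi.one_apply, mul_one, Matrix.smul_apply, smul_eq_mul]
  exact h.sum_adjMatrix_apply x

theorem IsRegularOfDegree.of_one_mul_adjMatrix {α : Type*} [NonAssocSemiring α] {d : ℕ}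
    (h : G.IsRegularOfDegree d) : of 1 * G.adjMatrix α = (d : α) • of 1 := by
  ext x y
  simp [mul_apply, ← h.sum_adjMatrix_apply y, adjMatrix_apply, adj_comm]

theorem _root_.Matrix.of_one_mul_of_one {α : Type*} [NonAssocSemiring α] :
    (of 1 : Matrix V V α) * of 1 = (Fintype.card V : α) • of 1 := by
  ext x y
  simp [mul_apply]

variable {ν k l μ : ℕ}

theorem IsSRGWith.μ_pos (h : G.IsSRGWith ν k l μ) {x y z : V} (hne : x ≠ y)
    (hnadj : ¬G.Adj x y) (hxz : G.Adj x z) (hyz : G.Adj y z) : 0 < μ := by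
  rw [← h.of_not_adj hne hnadj]
  exact Fintype.card_pos_iff.mpr ⟨⟨z, hxz, hyz⟩⟩

theorem IsSRGWith.μ_le_k (h : G.IsSRGWith ν k l μ) {x y : V} (hne : x ≠ y)
    (hnadj : ¬G.Adj x y) : μ ≤ k := by
  rw [← h.of_not_adj hne hnadj, ← h.regular x]
  exact G.card_commonNeighbors_le_degree_left x y

theorem IsSRGWith.k_lt_ν (h : G.IsSRGWith ν k l μ) (x : V) : k < ν := by
  rw [← h.regular x, ← h.card]
  exact G.degree_lt_card_verts x

variable [DecidableEq V]

theorem IsSRGWith.adjMatrix_mul_self (h : G.IsSRGWith ν k l μ) :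
    G.adjMatrix ℝ * G.adjMatrix ℝ
      = ((k : ℝ) - μ) • 1 + ((l : ℝ) - μ) • G.adjMatrix ℝ + (μ : ℝ) • of 1 := by
  have hcompl : Gᶜ.adjMatrix ℝ = of 1 - 1 - G.adjMatrix ℝ := by
    ext x y
    by_cases hxy : x = y <;> by_cases hadj : G.Adj x y <;> simp [hxy, hadj, one_apply]
  rw [← sq, h.matrix_eq, hcompl]
  simp only [← Nat.cast_smul_eq_nsmul ℝ]
  module

theorem IsSRGWith.param_eq_real [Nonempty V] (h : G.IsSRGWith ν k l μ) :
    (k : ℝ) ^ 2 = (k - μ) + (l - μ) * k + μ * ν := by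
  obtain ⟨x⟩ := ‹Nonempty V›
  have hJ := congrArg (· * (of 1 : Matrix V V ℝ)) h.adjMatrix_mul_self
  simp only [Matrix.mul_assoc, h.regular.adjMatrix_mul_of_one, Matrix.mul_smul,
    add_mul, smul_mul_assoc, one_mul, of_one_mul_of_one, h.card] at hJ
  have := congrFun (congrFun hJ x) x
  simp only [Matrix.add_apply, Matrix.smul_apply, of_apply, Pi.one_apply, smul_eq_mul,
    mul_one] at this
  linear_combination this

theorem IsSRGWith.scaledEigenprojection_mul_self (h : G.IsSRGWith ν k l μ) {r s : ℝ}
    (hsum : r + s = l - μ) (hprod : r * s = μ - k) (hκ : μ * ν = (k - r) * (k - s)) :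
    scaledEigenprojection (G.adjMatrix ℝ) (of 1) k μ r s
        * scaledEigenprojection (G.adjMatrix ℝ) (of 1) k μ r s
      = ((k - r) * (r - s)) • scaledEigenprojection (G.adjMatrix ℝ) (of 1) k μ r s := by
  refine Matrix.scaledEigenprojection_mul_self ?_ h.regular.adjMatrix_mul_of_one
    h.regular.of_one_mul_adjMatrix (by rw [of_one_mul_of_one, h.card]) hκ
  rw [h.adjMatrix_mul_self, hsum, ← neg_sub, ← hprod]

theorem IsSRGWith.sum_scaledEigenprojection_apply (h : G.IsSRGWith ν k l μ) {r s : ℝ}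
    (hκ : μ * ν = (k - r) * (k - s)) (x : V) :
    ∑ y, scaledEigenprojection (G.adjMatrix ℝ) (of 1) k μ r s x y = 0 := by
  simp only [scaledEigenprojection, Matrix.sub_apply, Matrix.smul_apply, of_apply, Pi.one_apply,
    smul_eq_mul, Finset.sum_sub_distrib, ← Finset.mul_sum, h.regular.sum_adjMatrix_apply,
    one_apply, Finset.sum_ite_eq, Finset.mem_univ, if_true, Finset.sum_const, Finset.card_univ,
    h.card, nsmul_eq_mul, mul_one]
  linear_combination -hκ

theorem IsSRGWith.embedsWithDistortion (h : G.IsSRGWith ν k l μ) (hconn : G.Connected)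
    (hdiam : ∀ x y, G.dist x y ≤ 2) {x y z : V} (hne : x ≠ y) (hnadj : ¬G.Adj x y)
    (hxz : G.Adj x z) (hyz : G.Adj y z) {r s : ℝ} (hsum : r + s = l - μ)
    (hprod : r * s = μ - k) (hκ : μ * ν = (k - r) * (k - s)) (hs : s < 0) (hr : 0 ≤ r)
    (hrk : r < k) : G.EmbedsWithDistortion √(4 * (s + 1) / s) := by
  set P := scaledEigenprojection (G.adjMatrix ℝ) (of 1) k μ r s
  have hP : P.PosSemidef :=
    .of_mul_self_eq_smul (isHermitian_scaledEigenprojection _ _ _ _)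
      (mul_pos (by linarith) (by linarith)) (h.scaledEigenprojection_mul_self hsum hprod hκ)
  -- the scaling that puts non-adjacent vertices at distance `2`
  have hβ : 0 ≤ -2 / (s * (k - r)) := div_nonneg_of_nonpos (by norm_num)
    (mul_nonpos_of_nonpos_of_nonneg hs.le (by linarith))
  obtain ⟨m, ρ, hρ⟩ := (hP.smul hβ).exists_eq_gram
  have hdist (u v : V) (huv : u ≠ v) :
      ‖ρ u - ρ v‖ ^ 2 = 4 * (s + G.adjMatrix ℝ u v) / s := by
    have hkr : (k : ℝ) - r ≠ 0 := by linarith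
    simp only [norm_sub_sq_eq_gram, ← hρ, Matrix.smul_apply, smul_eq_mul, P,
      scaledEigenprojection_adjMatrix_apply_self, scaledEigenprojection_adjMatrix_apply_of_ne huv]
    field_simp
    ring
  refine embedsWithDistortion_of_norm_sub_eq hconn hdiam hne hnadj hxz hyz ρ
    (fun u v huv ↦ ?_) (fun u v huv hnuv ↦ ?_)
  · rw [← Real.sqrt_sq (norm_nonneg _), hdist u v huv.ne]
    simp [huv]
  · rw [← Real.sqrt_sq (norm_nonneg _), hdist u v huv]
    norm_num [hnuv, hs.ne]

theorem IsSRGWith.sq_le_of_embedsWithDistortion (h : G.IsSRGWith ν k l μ) (hconn : G.Connected)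
    (hdiam : ∀ x y, G.dist x y ≤ 2) {r s : ℝ} (hsum : r + s = l - μ)
    (hprod : r * s = μ - k) (hκ : μ * ν = (k - r) * (k - s)) (hs : s < 0) (hr : 0 ≤ r)
    (hrk : r < k) {D : ℝ} (hD : G.EmbedsWithDistortion D) : 4 * (s + 1) / s ≤ D ^ 2 := by
  set Q := -scaledEigenprojection (G.adjMatrix ℝ) (of 1) k μ s r
  have hQ : Q.PosSemidef := by
    refine .of_mul_self_eq_smul (isHermitian_scaledEigenprojection _ _ _ _).neg
      (mul_pos (by linarith) (by linarith) : 0 < ((k : ℝ) - s) * (r - s)) ?_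
    rw [neg_mul_neg, h.scaledEigenprojection_mul_self (by linarith) (by linarith) (by linarith)]
    module
  have hrow (x : V) : ∑ y, Q x y = 0 := by
    simp only [Q, Matrix.neg_apply, Finset.sum_neg_distrib,
      h.sum_scaledEigenprojection_apply (hκ.trans (mul_comm _ _)) x, neg_zero]
  have hterm := hconn.posPart_negPart_mul_dist_sq hdiam (Nat.cast_nonneg μ)
    (by nlinarith : (μ : ℝ) ≤ k - s) (Q := Q) fun x y hxy ↦ by
      simp only [Q, Matrix.neg_apply, scaledEigenprojection_adjMatrix_apply_of_ne hxy, neg_sub]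
  have hbound := hD.sum_posPart_mul_dist_sq_le hQ hrow
  simp only [fun x y ↦ (hterm x y).1, fun x y ↦ (hterm x y).2, ← Finset.mul_sum,
    Finset.sum_sub_distrib, h.regular.sum_adjMatrix_apply, one_apply, Finset.sum_ite_eq,
    Finset.mem_univ, if_true, Finset.sum_const, Finset.card_univ, h.card, nsmul_eq_mul,
    mul_one] at hbound
  have hνk : 0 < (ν : ℝ) * k * (1 + r) := by
    have : 0 < (μ : ℝ) * ν := hκ ▸ mul_pos (by linarith) (by linarith)
    have : 0 < (ν : ℝ) := pos_of_mul_pos_right this (Nat.cast_nonneg μ)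
    have : 0 < (k : ℝ) := by linarith
    positivity
  -- `μ (ν - 1 - k) = -k (1 + r)(1 + s)` and `k - s - μ = -s (1 + r)`
  rw [div_le_iff_of_neg hs]
  refine le_of_mul_le_mul_left ?_ hνk
  linear_combination hbound - 4 * ν * hκ - (4 * ν * (1 + k) - D ^ 2 * ν * k) * hprod

end SimpleGraph

open SimpleGraph in
/-- For a connected strongly regular graph of diameter `2` with parameters
`(ν, k, λ, μ)` and larger nontrivial eigenvalue
`r = ((λ−μ) + √((λ−μ)² + 4(k−μ)))/2` we have
`c₂(G)² = 4(ν−k−1)(k−r)/(k(ν−k+r))`. -/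
theorem stmt13 {V : Type*} [Fintype V] (G : SimpleGraph V) [DecidableRel G.Adj]
    (ν k l μ : ℕ) (hsrg : G.IsSRGWith ν k l μ) (hconn : G.Connected)
    (hdiam_le : ∀ x y : V, G.dist x y ≤ 2) (hdiam_eq : ∃ x y : V, G.dist x y = 2)
    (r : ℝ)
    (hr : r = (((l : ℝ) - (μ : ℝ)) +
      Real.sqrt (((l : ℝ) - (μ : ℝ)) ^ 2 + 4 * ((k : ℝ) - (μ : ℝ)))) / 2) :
    leastDistortion G ^ 2 =
      4 * ((ν : ℝ) - (k : ℝ) - 1) * ((k : ℝ) - r) /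
        ((k : ℝ) * ((ν : ℝ) - (k : ℝ) + r)) := by
  classical
  obtain ⟨x, y, hxy⟩ := hdiam_eq
  obtain ⟨hne, hnadj, z, hxz, hyz⟩ := (hconn x y).exists_adj_adj_of_dist_eq_two hxy
  have : Nonempty V := ⟨x⟩
  obtain ⟨s, hs_def⟩ : ∃ s : ℝ, s = l - μ - r := ⟨_, rfl⟩
  have hμ : (0 : ℝ) < μ := by exact_mod_cast hsrg.μ_pos hne hnadj hxz hyz
  have hkν : (k : ℝ) < ν := by exact_mod_cast hsrg.k_lt_ν x
  obtain ⟨hprod, hκ, hs, hr0, hrk⟩ := srg_eigenvalue_bounds hμ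
    (by exact_mod_cast hsrg.μ_le_k hne hnadj) hkν hsrg.param_eq_real hr hs_def
  have hsum : r + s = l - μ := by rw [hs_def]; ring
  have hemb := hsrg.embedsWithDistortion hconn hdiam_le hne hnadj hxz hyz hsum hprod hκ hs hr0 hrk
  have hone_le : 1 ≤ 4 * (s + 1) / s := Real.one_le_sqrt.mp (hemb.one_le hxz)
  have hleast : IsLeast {D | G.EmbedsWithDistortion D} √(4 * (s + 1) / s) :=
    ⟨hemb, fun D hD ↦ Real.sqrt_le_iff.mpr ⟨by linarith [hD.one_le hxz],
      hsrg.sq_le_of_embedsWithDistortion hconn hdiam_le hsum hprod hκ hs hr0 hrk hD⟩⟩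
  rw [leastDistortion_eq_of_isLeast hleast, Real.sq_sqrt (by linarith),
    div_eq_div_iff hs.ne (by nlinarith)]
  refine mul_left_cancel₀ hμ.ne' ?_
  linear_combination 4 * ((s + 1) * k - (k - r) * s) * hκ - 4 * (k - r) * (s - k) * hprod
end

section
/- Let G be a connected strongly regular graph of diameter 2 with parameters (ν, k, λ, μ), and let r = (1/2)·((λ − μ) + √((λ − μ)^2 + 4(k − μ))). Then c_2(G)^2 ≥ 4·(ν − k − 1)·(k − r) / (k·(ν − k + r)). -/
/-!
Let `ρ` embed `G` into Euclidean space with distortion `D`. Distinct non-adjacent vertices are at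
distance at least `2`, so the sum of `‖ρ u - ρ v‖²` over ordered pairs of non-adjacent vertices is at least
`4ν(ν - k - 1)`, while the same sum over ordered pairs of adjacent vertices is at most `νkD²`.
These two sums are compared coordinatewise by a Poincaré inequality: on a centred function
`f : V → ℝ` the Dirichlet energy of `G` is `2(k‖f‖² - ⟪f, A f⟫) ≥ 2(k - r)‖f‖²`, because
`A² = (k - μ) + (λ - μ) A` on the vectors orthogonal to the constants, so that `r` is the
largest eigenvalue of `A` there; and the energies of `G` and of its complement add up to
`2ν‖f‖²`. This gives `(k - r) E_{Gᶜ}(ρ) ≤ (ν - k + r) E_G(ρ)`.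
-/

open Finset Matrix SimpleGraph

noncomputable def largerRoot (b c : ℝ) : ℝ := (b + √(b ^ 2 + 4 * c)) / 2

theorem exists_lt_largerRoot_add_eq_mul_eq {b c : ℝ} (hd : 0 < b ^ 2 + 4 * c) :
    ∃ s, s < largerRoot b c ∧ largerRoot b c + s = b ∧ largerRoot b c * s = -c := by
  have hsq := Real.sq_sqrt hd.le
  refine ⟨(b - √(b ^ 2 + 4 * c)) / 2, ?_, ?_, ?_⟩ <;> unfold largerRoot
  · linarith [Real.sqrt_pos.2 hd]
  · ring
  · linear_combination (-1 / 4 : ℝ) * hsq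

theorem largerRoot_nonneg {b c : ℝ} (hc : 0 ≤ c) : 0 ≤ largerRoot b c := by
  have : |b| ≤ √(b ^ 2 + 4 * c) := Real.abs_le_sqrt (by linarith)
  unfold largerRoot
  linarith [neg_abs_le b]

theorem largerRoot_le {b c t : ℝ} (hbt : b ≤ 2 * t) (hc : c ≤ t ^ 2 - b * t) :
    largerRoot b c ≤ t := by
  have : √(b ^ 2 + 4 * c) ≤ 2 * t - b := Real.sqrt_le_iff.2 ⟨by linarith, by nlinarith⟩
  unfold largerRoot
  linarith

theorem Matrix.dotProduct_mulVec_le_of_mulVec_mulVec_eq {n : Type*} [Fintype n]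
    {A : Matrix n n ℝ} (hA : A.IsSymm) {r s : ℝ} (hsr : s < r) {f : n → ℝ}
    (hf : A *ᵥ (A *ᵥ f) = (r + s) • (A *ᵥ f) - (r * s) • f) :
    f ⬝ᵥ (A *ᵥ f) ≤ r * (f ⬝ᵥ f) := by
  set g := A *ᵥ f - r • f
  have hg : A *ᵥ g = s • g := by
    rw [mulVec_sub, mulVec_smul, hf]
    module
  have hgg : g ⬝ᵥ g = (s - r) * (f ⬝ᵥ g) := by
    have hsymm : (A *ᵥ f) ⬝ᵥ g = f ⬝ᵥ (A *ᵥ g) := by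
      rw [dotProduct_mulVec, ← mulVec_transpose, hA.eq]
    rw [sub_dotProduct, hsymm, hg, smul_dotProduct, dotProduct_smul, smul_eq_mul, smul_eq_mul]
    ring
  have hfg : f ⬝ᵥ g = f ⬝ᵥ (A *ᵥ f) - r * (f ⬝ᵥ f) := by
    rw [dotProduct_sub, dotProduct_smul, smul_eq_mul]
  have hg_nonneg : 0 ≤ g ⬝ᵥ g := by simpa using dotProduct_self_star_nonneg g
  nlinarith

namespace SimpleGraph

section Poincare

variable {V : Type*} [Fintype V] {G : SimpleGraph V} [DecidableRel G.Adj] {n k l μ : ℕ}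

theorem IsSRGWith.adjMatrix_mulVec_mulVec_of_sum_eq_zero
    (h : G.IsSRGWith n k l μ) {f : V → ℝ} (hf : ∑ v, f v = 0) :
    G.adjMatrix ℝ *ᵥ (G.adjMatrix ℝ *ᵥ f) =
      ((k : ℝ) - μ) • f + ((l : ℝ) - μ) • (G.adjMatrix ℝ *ᵥ f) := by
  classical
  have hcompl : Gᶜ.adjMatrix ℝ *ᵥ f = -f - G.adjMatrix ℝ *ᵥ f := by
    have hJ : of (1 : V → V → ℝ) *ᵥ f = 0 := by
      ext; simp [mulVec, dotProduct, hf]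
    rw [← G.one_add_adjMatrix_add_compl_adjMatrix_eq_of_one ℝ, compl_adjMatrix_eq_adjMatrix_compl,
      add_mulVec, add_mulVec, one_mulVec] at hJ
    linear_combination hJ
  rw [mulVec_mulVec, ← sq, h.matrix_eq, add_mulVec, add_mulVec, smul_mulVec, smul_mulVec,
    smul_mulVec, one_mulVec, hcompl]
  simp only [← Nat.cast_smul_eq_nsmul ℝ]
  module

theorem IsSRGWith.dotProduct_adjMatrix_mulVec_le
    (h : G.IsSRGWith n k l μ) {r s : ℝ} (hsum : r + s = l - μ) (hprod : r * s = μ - k)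
    (hsr : s < r) {f : V → ℝ} (hf : ∑ v, f v = 0) :
    f ⬝ᵥ (G.adjMatrix ℝ *ᵥ f) ≤ r * (f ⬝ᵥ f) := by
  refine dotProduct_mulVec_le_of_mulVec_mulVec_eq G.isSymm_adjMatrix hsr ?_
  rw [h.adjMatrix_mulVec_mulVec_of_sum_eq_zero hf, hsum, hprod]
  module

theorem IsSRGWith.le_of_not_adj (h : G.IsSRGWith n k l μ) {v w : V} (hne : v ≠ w)
    (hnadj : ¬G.Adj v w) : μ ≤ k :=
  h.of_not_adj hne hnadj ▸ h.regular v ▸ G.card_commonNeighbors_le_degree_left v w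

theorem IsSRGWith.lt_of_adj (h : G.IsSRGWith n k l μ) {v w : V} (hadj : G.Adj v w) : l < k :=
  h.of_adj v w hadj ▸ h.regular v ▸ hadj.card_commonNeighbors_lt_degree

theorem IsRegularOfDegree.sum_degree (hG : G.IsRegularOfDegree k) :
    ∑ v, (G.degree v : ℝ) = Fintype.card V * k := by
  simp [hG.degree_eq]

theorem IsSRGWith.sum_degree_compl [DecidableEq V] (h : G.IsSRGWith n k l μ) [Nonempty V] :
    ∑ v, (Gᶜ.degree v : ℝ) = n * (n - k - 1) := by
  obtain ⟨v⟩ := ‹Nonempty V›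
  have hkn : k + 1 ≤ n := by
    rw [← h.card, ← h.regular v]
    exact G.degree_lt_card_verts v
  rw [h.compl_is_regular.sum_degree, h.card, Nat.sub_sub, Nat.cast_sub hkn]
  push_cast
  ring

variable (G) in
noncomputable def dirichletEnergy {E : Type*} [SeminormedAddCommGroup E] (x : V → E) : ℝ :=
  ∑ u, ∑ v, if G.Adj u v then ‖x u - x v‖ ^ 2 else 0

section SeminormedAddCommGroup

variable {E : Type*} [SeminormedAddCommGroup E]

theorem dirichletEnergy_sub_const (x : V → E) (c : E) :
    G.dirichletEnergy (fun v => x v - c) = G.dirichletEnergy x := by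
  simp [dirichletEnergy]

theorem dirichletEnergy_add_dirichletEnergy_compl [DecidableEq V] (x : V → E) :
    G.dirichletEnergy x + Gᶜ.dirichletEnergy x = ∑ u, ∑ v, ‖x u - x v‖ ^ 2 := by
  simp only [dirichletEnergy, ← sum_add_distrib]
  refine sum_congr rfl fun u _ => sum_congr rfl fun v _ => ?_
  by_cases huv : u = v
  · simp [huv]
  · by_cases hadj : G.Adj u v <;> simp [compl_adj, huv, hadj]

theorem sum_ite_adj_const (c : ℝ) :
    ∑ u, ∑ v, (if G.Adj u v then c else 0) = c * ∑ u, (G.degree u : ℝ) := by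
  simp_rw [degree_eq_sum_if_adj, mul_sum, mul_ite, mul_one, mul_zero]

theorem dirichletEnergy_le_of_forall_adj {x : V → E} {c : ℝ}
    (hc : ∀ u v, G.Adj u v → ‖x u - x v‖ ^ 2 ≤ c) :
    G.dirichletEnergy x ≤ c * ∑ u, (G.degree u : ℝ) := by
  rw [← sum_ite_adj_const]
  refine sum_le_sum fun u _ => sum_le_sum fun v _ => ?_
  split_ifs with hadj
  exacts [hc u v hadj, le_rfl]

theorem le_dirichletEnergy_of_forall_adj {x : V → E} {c : ℝ}
    (hc : ∀ u v, G.Adj u v → c ≤ ‖x u - x v‖ ^ 2) :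
    c * ∑ u, (G.degree u : ℝ) ≤ G.dirichletEnergy x := by
  rw [← sum_ite_adj_const]
  refine sum_le_sum fun u _ => sum_le_sum fun v _ => ?_
  split_ifs with hadj
  exacts [hc u v hadj, le_rfl]

end SeminormedAddCommGroup

theorem dirichletEnergy_euclideanSpace {ι : Type*} [Fintype ι] (x : V → EuclideanSpace ℝ ι) :
    G.dirichletEnergy x = ∑ i, G.dirichletEnergy (fun v => x v i) := by
  simp only [dirichletEnergy, EuclideanSpace.real_norm_sq_eq, PiLp.sub_apply]
  rw [sum_comm (γ := ι)]
  refine sum_congr rfl fun u _ => ?_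
  rw [sum_comm (γ := ι)]
  refine sum_congr rfl fun v _ => ?_
  split_ifs <;> simp

theorem sum_sum_sub_sq_of_sum_eq_zero {x : V → ℝ} (hx : ∑ v, x v = 0) :
    ∑ u, ∑ v, ‖x u - x v‖ ^ 2 = 2 * Fintype.card V * (x ⬝ᵥ x) := by
  simp only [Real.norm_eq_abs, sq_abs, sub_sq, sum_add_distrib, sum_sub_distrib, sum_const,
    card_univ, nsmul_eq_mul, ← mul_sum, ← sum_mul, hx, dotProduct, ← sq]
  ring

theorem IsRegularOfDegree.dirichletEnergy_eq (hG : G.IsRegularOfDegree k) (x : V → ℝ) :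
    G.dirichletEnergy x = 2 * (k * (x ⬝ᵥ x) - x ⬝ᵥ (G.adjMatrix ℝ *ᵥ x)) := by
  classical
  have hlap := G.lapMatrix_toLinearMap₂' ℝ x
  rw [toLinearMap₂'_apply', lapMatrix, sub_mulVec, dotProduct_sub,
    dotProduct_mulVec_degMatrix] at hlap
  have hdeg : ∑ v, (G.degree v : ℝ) * x v * x v = k * (x ⬝ᵥ x) := by
    simp [hG.degree_eq, dotProduct, mul_sum, mul_assoc]
  simp only [dirichletEnergy, Real.norm_eq_abs, sq_abs]
  linarith

theorem IsSRGWith.mul_dirichletEnergy_compl_le [DecidableEq V] (h : G.IsSRGWith n k l μ)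
    {r s : ℝ} (hsum : r + s = l - μ) (hprod : r * s = μ - k) (hsr : s < r) (x : V → ℝ) :
    (k - r) * Gᶜ.dirichletEnergy x ≤ (n - k + r) * G.dirichletEnergy x := by
  rcases isEmpty_or_nonempty V with _ | _
  · simp [dirichletEnergy]
  -- both energies are invariant under translation, so `x` may be assumed centred
  obtain ⟨c, hc⟩ : ∃ c : ℝ, ∑ v, (x v - c) = 0 := by
    refine ⟨(∑ u, x u) / n, ?_⟩
    have hn : (n : ℝ) ≠ 0 := by rw [← h.card]; exact_mod_cast Fintype.card_ne_zero
    simp only [sum_sub_distrib, sum_const, card_univ, h.card, nsmul_eq_mul]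
    field_simp
    ring
  rw [← dirichletEnergy_sub_const (G := G) x c, ← dirichletEnergy_sub_const (G := Gᶜ) x c]
  set y : V → ℝ := fun v => x v - c
  have hcompl := dirichletEnergy_add_dirichletEnergy_compl (G := G) y
  rw [sum_sum_sub_sq_of_sum_eq_zero hc, h.card] at hcompl
  have hlower : 2 * ((k : ℝ) - r) * (y ⬝ᵥ y) ≤ G.dirichletEnergy y := by
    rw [h.regular.dirichletEnergy_eq y]
    linarith [h.dotProduct_adjMatrix_mulVec_le hsum hprod hsr hc]
  have hn : (0 : ℝ) ≤ n := n.cast_nonneg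
  nlinarith [mul_le_mul_of_nonneg_left hlower hn]

theorem IsSRGWith.mul_dirichletEnergy_compl_le_euclideanSpace [DecidableEq V]
    (h : G.IsSRGWith n k l μ) {r s : ℝ} (hsum : r + s = l - μ) (hprod : r * s = μ - k)
    (hsr : s < r) {ι : Type*} [Fintype ι] (x : V → EuclideanSpace ℝ ι) :
    (k - r) * Gᶜ.dirichletEnergy x ≤ (n - k + r) * G.dirichletEnergy x := by
  rw [dirichletEnergy_euclideanSpace, dirichletEnergy_euclideanSpace, mul_sum, mul_sum]
  exact sum_le_sum fun i _ => h.mul_dirichletEnergy_compl_le hsum hprod hsr _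

end Poincare

section Distortion

variable {V : Type*} {G : SimpleGraph V}

variable (G) in
def IsDistortionEmbedding {E : Type*} [SeminormedAddCommGroup E] (D : ℝ) (ρ : V → E) : Prop :=
  ∀ x y : V, (G.dist x y : ℝ) ≤ ‖ρ x - ρ y‖ ∧ ‖ρ x - ρ y‖ ≤ D * G.dist x y

theorem Connected.exists_isDistortionEmbedding [Fintype V] (hconn : G.Connected) :
    ∃ (D : ℝ) (m : ℕ) (ρ : V → EuclideanSpace ℝ (Fin m)), G.IsDistortionEmbedding D ρ := by
  obtain ⟨N, hdist_le⟩ : ∃ N : ℝ, ∀ x y, (G.dist x y : ℝ) ≤ N :=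
    ⟨_, fun x y => Nat.cast_le.2 (le_sup (f := fun p : V × V => G.dist p.1 p.2) (mem_univ (x, y)))⟩
  -- scaled standard basis vectors are pairwise at distance between `N` and `2N`
  refine ⟨2 * N, Fintype.card V,
    fun v => N • EuclideanSpace.single (Fintype.equivFin V v) 1, fun x y => ?_⟩
  obtain rfl | hxy := eq_or_ne x y
  · simp
  have hN : 0 ≤ N := le_trans (Nat.cast_nonneg _) (hdist_le x y)
  have hpos : (1 : ℝ) ≤ G.dist x y := by exact_mod_cast hconn.pos_dist_of_ne hxy
  have hne : Fintype.equivFin V x ≠ Fintype.equivFin V y := (Fintype.equivFin V).injective.ne hxy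
  constructor
  · refine (hdist_le x y).trans ?_
    have hcoord := PiLp.norm_apply_le (N • EuclideanSpace.single (Fintype.equivFin V x) (1 : ℝ)
      - N • EuclideanSpace.single (Fintype.equivFin V y) 1) (Fintype.equivFin V x)
    simp only [PiLp.sub_apply, PiLp.smul_apply, PiLp.single_eq_same, smul_eq_mul, mul_one, ne_eq,
      hne, not_false_eq_true, PiLp.single_eq_of_ne, mul_zero, sub_zero, Real.norm_eq_abs,
      abs_of_nonneg hN] at hcoord
    exact hcoord
  · refine (norm_sub_le _ _).trans ?_
    simp only [norm_smul, PiLp.norm_single, norm_one, mul_one, Real.norm_eq_abs, abs_of_nonneg hN]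
    nlinarith

theorem IsDistortionEmbedding.one_le {E : Type*} [SeminormedAddCommGroup E] [Nontrivial V]
    (hconn : G.Connected) {D : ℝ} {ρ : V → E} (hρ : G.IsDistortionEmbedding D ρ) : 1 ≤ D := by
  obtain ⟨x, y, hxy⟩ := exists_pair_ne V
  have hpos : (0 : ℝ) < G.dist x y := by exact_mod_cast hconn.pos_dist_of_ne hxy
  have := (hρ x y).1.trans (hρ x y).2
  nlinarith

theorem le_leastDistortion_sq [Fintype V] [Nontrivial V] (hconn : G.Connected) {R : ℝ}
    (h : ∀ (D : ℝ) (m : ℕ) (ρ : V → EuclideanSpace ℝ (Fin m)), G.IsDistortionEmbedding D ρ →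
      R ≤ D ^ 2) :
    R ≤ leastDistortion G ^ 2 := by
  obtain ⟨D₀, m₀, ρ₀, hρ₀⟩ := hconn.exists_isDistortionEmbedding
  have hsqrt : √R ≤ leastDistortion G := by
    refine le_csInf ⟨D₀, m₀, ρ₀, hρ₀⟩ ?_
    rintro D ⟨m, ρ, hρ⟩
    exact Real.sqrt_le_iff.2 ⟨zero_le_one.trans (IsDistortionEmbedding.one_le hconn hρ), h D m ρ hρ⟩
  rcases le_or_gt R 0 with hR | hR
  · exact hR.trans (sq_nonneg _)
  · calc R = √R ^ 2 := (Real.sq_sqrt hR.le).symm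
      _ ≤ leastDistortion G ^ 2 := pow_le_pow_left₀ (Real.sqrt_nonneg R) hsqrt 2

theorem IsSRGWith.mul_le_mul_of_isDistortionEmbedding [Fintype V] [DecidableEq V]
    [DecidableRel G.Adj] [Nonempty V] {n k l μ : ℕ} (h : G.IsSRGWith n k l μ)
    (hconn : G.Connected) {r s : ℝ} (hsum : r + s = l - μ) (hprod : r * s = μ - k)
    (hsr : s < r) (hrk : r ≤ k) (hr : 0 ≤ n - k + r) {D : ℝ} {m : ℕ}
    {ρ : V → EuclideanSpace ℝ (Fin m)} (hρ : G.IsDistortionEmbedding D ρ) :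
    (k - r) * (4 * (n * (n - k - 1))) ≤ (n - k + r) * (D ^ 2 * (n * k)) := by
  have hcompl : 4 * (n * (n - k - 1)) ≤ Gᶜ.dirichletEnergy ρ := by
    rw [← h.sum_degree_compl]
    refine le_dirichletEnergy_of_forall_adj fun u v huv => ?_
    obtain ⟨hne, hnadj⟩ := (compl_adj G u v).1 huv
    have h2 : 2 ≤ G.dist u v := by
      have := hconn.pos_dist_of_ne hne
      have := mt dist_eq_one_iff_adj.1 hnadj
      omega
    have h2' : (2 : ℝ) ≤ ‖ρ u - ρ v‖ := le_trans (by exact_mod_cast h2) (hρ u v).1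
    nlinarith
  have hadj : G.dirichletEnergy ρ ≤ D ^ 2 * (n * k) := by
    rw [← h.card, ← h.regular.sum_degree]
    refine dirichletEnergy_le_of_forall_adj fun u v huv => ?_
    have := (hρ u v).2
    rw [dist_eq_one_iff_adj.2 huv, Nat.cast_one, mul_one] at this
    exact pow_le_pow_left₀ (norm_nonneg _) this 2
  calc (k - r) * (4 * (n * (n - k - 1)))
      ≤ (k - r) * Gᶜ.dirichletEnergy ρ := mul_le_mul_of_nonneg_left hcompl (by linarith)
    _ ≤ (n - k + r) * G.dirichletEnergy ρ :=
      h.mul_dirichletEnergy_compl_le_euclideanSpace hsum hprod hsr ρ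
    _ ≤ (n - k + r) * (D ^ 2 * (n * k)) := mul_le_mul_of_nonneg_left hadj hr

end Distortion

end SimpleGraph

theorem stmt14_general {V : Type*} [Fintype V] (G : SimpleGraph V) [DecidableRel G.Adj]
    (ν k l μ : ℕ) (hsrg : G.IsSRGWith ν k l μ) (hconn : G.Connected)
    (hdiam_eq : ∃ x y : V, G.dist x y = 2)
    (r : ℝ)
    (hr : r = (((l : ℝ) - (μ : ℝ)) +
      Real.sqrt (((l : ℝ) - (μ : ℝ)) ^ 2 + 4 * ((k : ℝ) - (μ : ℝ)))) / 2) :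
    leastDistortion G ^ 2 ≥
      4 * ((ν : ℝ) - (k : ℝ) - 1) * ((k : ℝ) - r) /
        ((k : ℝ) * ((ν : ℝ) - (k : ℝ) + r)) := by
  classical
  obtain ⟨x, y, hxy⟩ := hdiam_eq
  obtain ⟨w, hw⟩ := (hconn x y).exists_walk_length_eq_dist
  obtain ⟨a, b, c, hab, -, hac, hne⟩ := w.exists_adj_adj_not_adj_ne hw (by omega)
  have : Nontrivial V := ⟨a, b, hab.ne⟩
  have hkν : (k : ℝ) + 1 ≤ ν := by
    exact_mod_cast hsrg.card ▸ hsrg.regular a ▸ G.degree_lt_card_verts a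
  have hμk : (μ : ℝ) ≤ k := by exact_mod_cast hsrg.le_of_not_adj hne hac
  have hlk : (l : ℝ) + 1 ≤ k := by exact_mod_cast hsrg.lt_of_adj hab
  replace hr : r = largerRoot ((l : ℝ) - μ) ((k : ℝ) - μ) := hr
  obtain ⟨s, hsr, hsum, hprod⟩ := exists_lt_largerRoot_add_eq_mul_eq
    (b := (l : ℝ) - μ) (c := (k : ℝ) - μ) (by nlinarith)
  have hr0 : 0 ≤ r := hr ▸ largerRoot_nonneg (by linarith)
  have hrk : r ≤ k := hr ▸ largerRoot_le (by linarith) (by nlinarith)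
  rw [← hr] at hsr hsum hprod
  refine le_leastDistortion_sq hconn fun D m ρ hρ =>
    div_le_of_le_mul₀ (mul_nonneg k.cast_nonneg (by linarith)) (sq_nonneg D) ?_
  have := hsrg.mul_le_mul_of_isDistortionEmbedding hconn hsum (by linarith) hsr hrk
    (by linarith) hρ
  exact le_of_mul_le_mul_left (by linear_combination this) (by linarith : (0 : ℝ) < ν)

/-- For a connected strongly regular graph of diameter `2` with parameters
`(ν, k, λ, μ)` and larger nontrivial eigenvalue
`r = ((λ−μ) + √((λ−μ)² + 4(k−μ)))/2` we have
`c₂(G)² ≥ 4(ν−k−1)(k−r)/(k(ν−k+r))`. -/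
theorem stmt14 {V : Type*} [Fintype V] (G : SimpleGraph V) [DecidableRel G.Adj]
    (ν k l μ : ℕ) (hsrg : G.IsSRGWith ν k l μ) (hconn : G.Connected)
    (hdiam_le : ∀ x y : V, G.dist x y ≤ 2) (hdiam_eq : ∃ x y : V, G.dist x y = 2)
    (r : ℝ)
    (hr : r = (((l : ℝ) - (μ : ℝ)) +
      Real.sqrt (((l : ℝ) - (μ : ℝ)) ^ 2 + 4 * ((k : ℝ) - (μ : ℝ)))) / 2) :
    leastDistortion G ^ 2 ≥
      4 * ((ν : ℝ) - (k : ℝ) - 1) * ((k : ℝ) - r) /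
        ((k : ℝ) * ((ν : ℝ) - (k : ℝ) + r)) :=
  stmt14_general G ν k l μ hsrg hconn hdiam_eq r hr
end
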